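/- arXiv:math/0303124 — 3 statements merged into one kernel-verified Lean document; each statement's English description precedes it below -/
import Mathlib

section
/- (Koga's criterion, type D, case (2B)) Let N ≥ 2, u ∈ B_sp^+ and v ∈ B_sp^−. Then u ⊗ v lies in the connected component of (+,…,+) ⊗ (+^{N−1}, −) in B_sp^+ × B_sp^− (tensor-product type-D_N operators) if and only if the pair of columns (t(u), t(v)) is (N−1)-semistandard. -/
namespace CrystalPaper

/-- A sign sequence of length `N`: `true` codes `+`, `false` codes `−`. -/
abbrev Seq (N : ℕ) := Fin N → Bool

/-- The constant sequence `(+,…,+)`. -/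
def top (N : ℕ) : Seq N := fun _ => true

/-- The constant sequence `(−,…,−)`. -/
def bot (N : ℕ) : Seq N := fun _ => false

/-- The sequence `(+^k, −^{N−k})` (first `k` entries `+`, the rest `−`). -/
def lowSeq (N k : ℕ) : Seq N := fun i => decide ((i : ℕ) < k)

/-- The number of `−` entries of a sign sequence. -/
def minusCount (N : ℕ) (b : Seq N) : ℕ :=
  (Finset.univ.filter (fun i => b i = false)).card

/-- `B_sp^+`: sign sequences with an even number of `−` entries. -/
def BspPlus (N : ℕ) (b : Seq N) : Prop := Even (minusCount N b)

/-- `B_sp^−`: sign sequences with an odd number of `−` entries. -/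
def BspMinus (N : ℕ) (b : Seq N) : Prop := Odd (minusCount N b)

/-- The type-`D_N` Kashiwara raising operator `ẽ_l`, labels `1 ≤ l ≤ N`
(`none` codes `0`).  For `1 ≤ l ≤ N−1` it replaces `(b_l, b_{l+1}) = (+,−)` by `(−,+)`;
`ẽ_N` replaces `(b_{N−1}, b_N) = (+,+)` by `(−,−)`. -/
def eD (N l : ℕ) (b : Seq N) : Option (Seq N) :=
  if h : 1 ≤ l ∧ l + 1 ≤ N then
    let i : Fin N := ⟨l - 1, by omega⟩
    let j : Fin N := ⟨l, by omega⟩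
    if b i = true ∧ b j = false then
      some (Function.update (Function.update b i false) j true)
    else none
  else if h2 : l = N ∧ 2 ≤ N then
    let i : Fin N := ⟨N - 2, by omega⟩
    let j : Fin N := ⟨N - 1, by omega⟩
    if b i = true ∧ b j = true then
      some (Function.update (Function.update b i false) j false)
    else none
  else none

/-- The type-`D_N` Kashiwara lowering operator `f̃_l`, labels `1 ≤ l ≤ N`.
For `1 ≤ l ≤ N−1` it replaces `(b_l, b_{l+1}) = (−,+)` by `(+,−)`;
`f̃_N` replaces `(b_{N−1}, b_N) = (−,−)` by `(+,+)`. -/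
def fD (N l : ℕ) (b : Seq N) : Option (Seq N) :=
  if h : 1 ≤ l ∧ l + 1 ≤ N then
    let i : Fin N := ⟨l - 1, by omega⟩
    let j : Fin N := ⟨l, by omega⟩
    if b i = false ∧ b j = true then
      some (Function.update (Function.update b i true) j false)
    else none
  else if h2 : l = N ∧ 2 ≤ N then
    let i : Fin N := ⟨N - 2, by omega⟩
    let j : Fin N := ⟨N - 1, by omega⟩
    if b i = false ∧ b j = false then
      some (Function.update (Function.update b i true) j true)
    else none
  else none

/-- `n`-fold iteration of a partial operator. -/
def iterOp {σ : Type*} (f : σ → Option σ) : ℕ → σ → Option σ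
  | 0, x => some x
  | n + 1, x => (f x).bind (iterOp f n)

/-- `max {n ≥ 0 : f^n x ≠ 0}`, as a supremum in `ℕ`.  Used for the string
lengths `ε_l(x) = max{n : ẽ_l^n x ≠ 0}` and `φ_l(x) = max{n : f̃_l^n x ≠ 0}`. -/
noncomputable def opMax {σ : Type*} (f : σ → Option σ) (x : σ) : ℕ :=
  sSup {n | iterOp f n x ≠ none}

/-- The tensor-product raising operator `ẽ_l` on pairs (lowest-weight convention):
`ẽ_l(x ⊗ y) = x ⊗ ẽ_l y` if `ε_l(x) ≤ φ_l(y)`, and `ẽ_l x ⊗ y` otherwise. -/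
noncomputable def teD (N l : ℕ) (p : Seq N × Seq N) : Option (Seq N × Seq N) :=
  if opMax (eD N l) p.1 ≤ opMax (fD N l) p.2 then (eD N l p.2).map fun y => (p.1, y)
  else (eD N l p.1).map fun x => (x, p.2)

/-- The tensor-product lowering operator `f̃_l` on pairs (lowest-weight convention):
`f̃_l(x ⊗ y) = x ⊗ f̃_l y` if `ε_l(x) < φ_l(y)`, and `f̃_l x ⊗ y` otherwise. -/
noncomputable def tfD (N l : ℕ) (p : Seq N × Seq N) : Option (Seq N × Seq N) :=
  if opMax (eD N l) p.1 < opMax (fD N l) p.2 then (fD N l p.2).map fun y => (p.1, y)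
  else (fD N l p.1).map fun x => (x, p.2)

/-- Connectedness in the tensor product of two type-`D_N` spin crystals:
the equivalence relation generated by single applications of the operators
`ẽ_l`, `f̃_l` with `1 ≤ l ≤ N`. -/
def ConnD (N : ℕ) (p q : Seq N × Seq N) : Prop :=
  Relation.EqvGen (fun p q => ∃ l, 1 ≤ l ∧ l ≤ N ∧ (teD N l p = some q ∨ tfD N l p = some q)) p q

/-- The column `t(b)` encoding a sign sequence `b`:
the increasing list of the letters `{a : b_a = +} ∪ {ā : b_a = −}` of the alphabet
`S = {1,…,N,N̄,…,1̄}`, where the letter `a` is coded by the natural number `a`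
and the barred letter `ā` by `2N+1−a` (so that `N̄,…,1̄` are coded by `N+1,…,2N`). -/
def colList (N : ℕ) (b : Seq N) : List ℕ :=
  Finset.sort
    (Finset.image (fun i : Fin N => if b i then (i : ℕ) + 1 else 2 * N - (i : ℕ)) Finset.univ)
    (· ≤ ·)

/-- The type-`D` partial order `⪯` on coded letters: the natural order on the codes,
except that `N` and `N̄` (codes `N` and `N+1`) are incomparable. -/
def preceqD (N x y : ℕ) : Prop := x = y ∨ (x < y ∧ ¬(x = N ∧ y = N + 1))

/-- The pair of columns `(a, c)` is `k`-semistandard: `c_r ⪯ a_{N−k+r}` for all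
`1 ≤ r ≤ k` (entries are `1`-based; by convention this is false for `k > N`). -/
def kSemiD (N k : ℕ) (a c : List ℕ) : Prop :=
  k ≤ N ∧ ∀ r, 1 ≤ r → r ≤ k → preceqD N (c.getD (r - 1) 0) (a.getD (N - k + r - 1) 0)

/-- prefix minus count -/
def mcnt (N : ℕ) (b : Seq N) (a : ℕ) : ℕ :=
  (Finset.univ.filter (fun i : Fin N => (i : ℕ) < a ∧ b i = false)).card

lemma minusCount_eq_mcnt (N : ℕ) (b : Seq N) : minusCount N b = mcnt N b N := by
  unfold minusCount mcnt
  congr 1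
  apply Finset.filter_congr
  intro i _
  simp [i.isLt]

lemma mcnt_mono (N : ℕ) (b : Seq N) {a a' : ℕ} (h : a ≤ a') :
    mcnt N b a ≤ mcnt N b a' := by
  apply Finset.card_le_card
  intro i hi
  simp only [Finset.mem_filter] at hi ⊢
  exact ⟨hi.1, lt_of_lt_of_le hi.2.1 h, hi.2.2⟩

lemma mcnt_succ (N : ℕ) (b : Seq N) (a : ℕ) (ha : a < N) :
    mcnt N b (a + 1) = mcnt N b a + (if b ⟨a, ha⟩ = false then 1 else 0) := by
  unfold mcnt
  by_cases hb : b ⟨a, ha⟩ = false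
  · rw [if_pos hb]
    have : (Finset.univ.filter (fun i : Fin N => (i : ℕ) < a + 1 ∧ b i = false)) =
        insert ⟨a, ha⟩ (Finset.univ.filter (fun i : Fin N => (i : ℕ) < a ∧ b i = false)) := by
      ext i
      simp only [Finset.mem_filter, Finset.mem_insert, Finset.mem_univ, true_and]
      constructor
      · rintro ⟨h1, h2⟩
        rcases Nat.lt_succ_iff_lt_or_eq.1 h1 with h | h
        · exact Or.inr ⟨h, h2⟩
        · left; exact Fin.ext h
      · rintro (rfl | ⟨h1, h2⟩)
        · exact ⟨Nat.lt_succ_self _, hb⟩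
        · exact ⟨Nat.lt_succ_of_lt h1, h2⟩
    rw [this, Finset.card_insert_of_notMem (by simp)]
  · rw [if_neg hb, add_zero]
    apply congrArg Finset.card
    ext i
    simp only [Finset.mem_filter, Finset.mem_univ, true_and]
    constructor
    · rintro ⟨h1, h2⟩
      rcases Nat.lt_succ_iff_lt_or_eq.1 h1 with h | h
      · exact ⟨h, h2⟩
      · exact absurd h2 (by rwa [show i = ⟨a, ha⟩ from Fin.ext h])
    · rintro ⟨h1, h2⟩
      exact ⟨Nat.lt_succ_of_lt h1, h2⟩

lemma mcnt_zero (N : ℕ) (b : Seq N) : mcnt N b 0 = 0 := by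
  unfold mcnt; simp

lemma mcnt_stab (N : ℕ) (b : Seq N) {a : ℕ} (h : N ≤ a) : mcnt N b a = mcnt N b N := by
  unfold mcnt
  congr 1
  apply Finset.filter_congr
  intro i _
  simp [i.isLt, lt_of_lt_of_le i.isLt h]

/-- congruence: mcnt only depends on values at indices < a -/
lemma mcnt_congr (N : ℕ) (b b' : Seq N) (a : ℕ)
    (h : ∀ i : Fin N, (i : ℕ) < a → b i = b' i) : mcnt N b a = mcnt N b' a := by
  unfold mcnt
  congr 1
  apply Finset.filter_congr
  intro i _
  by_cases hi : (i : ℕ) < a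
  · simp [hi, h i hi]
  · simp [hi]
lemma mcnt_update_of_ge {N : ℕ} (b : Seq N) (i : Fin N) (x : Bool) {a : ℕ}
    (h : a ≤ (i : ℕ)) : mcnt N (Function.update b i x) a = mcnt N b a := by
  apply mcnt_congr
  intro k hk
  rw [Function.update_apply, if_neg]
  intro hki
  subst hki
  omega

lemma mcnt_update_same {N : ℕ} (b : Seq N) (i : Fin N) (x : Bool) (a : ℕ)
    (hb : b i = x) : mcnt N (Function.update b i x) a = mcnt N b a := by
  rw [← hb, Function.update_eq_self]

lemma mcnt_update_false {N : ℕ} (b : Seq N) (i : Fin N) {a : ℕ}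
    (h : (i : ℕ) < a) (hb : b i = true) :
    mcnt N (Function.update b i false) a = mcnt N b a + 1 := by
  unfold mcnt
  have : (Finset.univ.filter (fun k : Fin N => (k : ℕ) < a ∧ Function.update b i false k = false))
      = insert i (Finset.univ.filter (fun k : Fin N => (k : ℕ) < a ∧ b k = false)) := by
    ext k
    simp only [Finset.mem_filter, Finset.mem_insert, Finset.mem_univ, true_and]
    by_cases hk : k = i
    · subst hk
      simp [Function.update_self, h]
    · simp [Function.update_of_ne hk, hk]
  rw [this, Finset.card_insert_of_notMem (by simp [hb])]

lemma mcnt_update_true {N : ℕ} (b : Seq N) (i : Fin N) {a : ℕ}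
    (h : (i : ℕ) < a) (hb : b i = false) :
    mcnt N (Function.update b i true) a + 1 = mcnt N b a := by
  have := mcnt_update_false (Function.update b i true) i h (by simp)
  have e : Function.update (Function.update b i true) i false = b := by
    funext k
    by_cases hk : k = i
    · subst hk; simp [hb]
    · simp [Function.update_of_ne hk]
  rw [e] at this
  omega

section ops
variable {N : ℕ}

lemma eD_some_iff_lt {l : ℕ} (h1 : 1 ≤ l) (h2 : l + 1 ≤ N) (b c : Seq N) :
    eD N l b = some c ↔
      b ⟨l - 1, by omega⟩ = true ∧ b ⟨l, by omega⟩ = false ∧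
        c = Function.update (Function.update b ⟨l - 1, by omega⟩ false) ⟨l, by omega⟩ true := by
  unfold eD
  rw [dif_pos ⟨h1, h2⟩]
  dsimp only
  split_ifs with h
  · simp only [Option.some.injEq]
    constructor
    · rintro rfl; exact ⟨h.1, h.2, rfl⟩
    · rintro ⟨_, _, rfl⟩; rfl
  · constructor
    · rintro ⟨⟩
    · rintro ⟨ha, hb', _⟩; exact absurd ⟨ha, hb'⟩ h

lemma fD_some_iff_lt {l : ℕ} (h1 : 1 ≤ l) (h2 : l + 1 ≤ N) (b c : Seq N) :
    fD N l b = some c ↔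
      b ⟨l - 1, by omega⟩ = false ∧ b ⟨l, by omega⟩ = true ∧
        c = Function.update (Function.update b ⟨l - 1, by omega⟩ true) ⟨l, by omega⟩ false := by
  unfold fD
  rw [dif_pos ⟨h1, h2⟩]
  dsimp only
  split_ifs with h
  · simp only [Option.some.injEq]
    constructor
    · rintro rfl; exact ⟨h.1, h.2, rfl⟩
    · rintro ⟨_, _, rfl⟩; rfl
  · constructor
    · rintro ⟨⟩
    · rintro ⟨ha, hb', _⟩; exact absurd ⟨ha, hb'⟩ h

lemma eD_some_iff_N (hN : 2 ≤ N) (b c : Seq N) :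
    eD N N b = some c ↔
      b ⟨N - 2, by omega⟩ = true ∧ b ⟨N - 1, by omega⟩ = true ∧
        c = Function.update (Function.update b ⟨N - 2, by omega⟩ false) ⟨N - 1, by omega⟩ false := by
  unfold eD
  rw [dif_neg (by omega), dif_pos ⟨rfl, hN⟩]
  dsimp only
  split_ifs with h
  · simp only [Option.some.injEq]
    constructor
    · rintro rfl; exact ⟨h.1, h.2, rfl⟩
    · rintro ⟨_, _, rfl⟩; rfl
  · constructor
    · rintro ⟨⟩
    · rintro ⟨ha, hb', _⟩; exact absurd ⟨ha, hb'⟩ h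

lemma fD_some_iff_N (hN : 2 ≤ N) (b c : Seq N) :
    fD N N b = some c ↔
      b ⟨N - 2, by omega⟩ = false ∧ b ⟨N - 1, by omega⟩ = false ∧
        c = Function.update (Function.update b ⟨N - 2, by omega⟩ true) ⟨N - 1, by omega⟩ true := by
  unfold fD
  rw [dif_neg (by omega), dif_pos ⟨rfl, hN⟩]
  dsimp only
  split_ifs with h
  · simp only [Option.some.injEq]
    constructor
    · rintro rfl; exact ⟨h.1, h.2, rfl⟩
    · rintro ⟨_, _, rfl⟩; rfl
  · constructor
    · rintro ⟨⟩
    · rintro ⟨ha, hb', _⟩; exact absurd ⟨ha, hb'⟩ h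

end ops
section opmax

lemma opMax_eq_zero {σ : Type*} (f : σ → Option σ) (x : σ) (h : f x = none) :
    opMax f x = 0 := by
  unfold opMax
  have : {n | iterOp f n x ≠ none} = {0} := by
    ext n
    cases n with
    | zero => simp [iterOp]
    | succ m => simp [iterOp, h]
  rw [this, csSup_singleton]

lemma opMax_eq_one {σ : Type*} (f : σ → Option σ) (x y : σ) (h : f x = some y)
    (h2 : f y = none) : opMax f x = 1 := by
  unfold opMax
  have : {n | iterOp f n x ≠ none} = {0, 1} := by
    ext n
    match n with
    | 0 => simp [iterOp]
    | 1 => simp [iterOp, h]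
    | (m+2) =>
      simp only [Set.mem_setOf_eq, Set.mem_insert_iff, Set.mem_singleton_iff]
      have : iterOp f (m+2) x = none := by
        show (f x).bind (iterOp f (m+1)) = none
        rw [h, Option.bind_some]
        show (f y).bind (iterOp f m) = none
        rw [h2, Option.bind_none]
      simp [this]
  rw [this, csSup_pair]
  rfl

end opmax

section excl
variable {N : ℕ} (hN : 2 ≤ N)

lemma fin_ne_of_val_ne {i j : Fin N} (h : (i : ℕ) ≠ (j : ℕ)) : i ≠ j :=
  fun he => h (by rw [he])

include hN

lemma eD_of_fD {l : ℕ} (hl1 : 1 ≤ l) (hl2 : l ≤ N) {b c : Seq N}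
    (h : fD N l b = some c) : eD N l c = some b := by
  by_cases hc : l + 1 ≤ N
  · rw [fD_some_iff_lt hl1 hc] at h
    obtain ⟨hbi, hbj, rfl⟩ := h
    rw [eD_some_iff_lt hl1 hc]
    have hij : (⟨l - 1, by omega⟩ : Fin N) ≠ ⟨l, by omega⟩ :=
      fin_ne_of_val_ne (by simp; omega)
    refine ⟨by rw [Function.update_of_ne hij, Function.update_self],
      by rw [Function.update_self], ?_⟩
    funext k
    by_cases hk1 : k = (⟨l, by omega⟩ : Fin N)
    · subst hk1
      rw [Function.update_self, hbj]
    · by_cases hk2 : k = (⟨l - 1, by omega⟩ : Fin N)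
      · subst hk2
        rw [Function.update_of_ne hij, Function.update_self, hbi]
      · simp only [Function.update_of_ne hk1, Function.update_of_ne hk2]
  · have hl : l = N := by omega
    rw [hl] at h ⊢
    rw [fD_some_iff_N hN] at h
    obtain ⟨hbi, hbj, rfl⟩ := h
    rw [eD_some_iff_N hN]
    have hij : (⟨N - 2, by omega⟩ : Fin N) ≠ ⟨N - 1, by omega⟩ :=
      fin_ne_of_val_ne (by simp; omega)
    refine ⟨by rw [Function.update_of_ne hij, Function.update_self],
      by rw [Function.update_self], ?_⟩
    funext k
    by_cases hk1 : k = (⟨N - 1, by omega⟩ : Fin N)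
    · subst hk1
      rw [Function.update_self, hbj]
    · by_cases hk2 : k = (⟨N - 2, by omega⟩ : Fin N)
      · subst hk2
        rw [Function.update_of_ne hij, Function.update_self, hbi]
      · simp only [Function.update_of_ne hk1, Function.update_of_ne hk2]

lemma fD_of_eD {l : ℕ} (hl1 : 1 ≤ l) (hl2 : l ≤ N) {b c : Seq N}
    (h : eD N l b = some c) : fD N l c = some b := by
  by_cases hc : l + 1 ≤ N
  · rw [eD_some_iff_lt hl1 hc] at h
    obtain ⟨hbi, hbj, rfl⟩ := h
    rw [fD_some_iff_lt hl1 hc]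
    have hij : (⟨l - 1, by omega⟩ : Fin N) ≠ ⟨l, by omega⟩ :=
      fin_ne_of_val_ne (by simp; omega)
    refine ⟨by rw [Function.update_of_ne hij, Function.update_self],
      by rw [Function.update_self], ?_⟩
    funext k
    by_cases hk1 : k = (⟨l, by omega⟩ : Fin N)
    · subst hk1
      rw [Function.update_self, hbj]
    · by_cases hk2 : k = (⟨l - 1, by omega⟩ : Fin N)
      · subst hk2
        rw [Function.update_of_ne hij, Function.update_self, hbi]
      · simp only [Function.update_of_ne hk1, Function.update_of_ne hk2]
  · have hl : l = N := by omega
    rw [hl] at h ⊢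
    rw [eD_some_iff_N hN] at h
    obtain ⟨hbi, hbj, rfl⟩ := h
    rw [fD_some_iff_N hN]
    have hij : (⟨N - 2, by omega⟩ : Fin N) ≠ ⟨N - 1, by omega⟩ :=
      fin_ne_of_val_ne (by simp; omega)
    refine ⟨by rw [Function.update_of_ne hij, Function.update_self],
      by rw [Function.update_self], ?_⟩
    funext k
    by_cases hk1 : k = (⟨N - 1, by omega⟩ : Fin N)
    · subst hk1
      rw [Function.update_self, hbj]
    · by_cases hk2 : k = (⟨N - 2, by omega⟩ : Fin N)
      · subst hk2
        rw [Function.update_of_ne hij, Function.update_self, hbi]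
      · simp only [Function.update_of_ne hk1, Function.update_of_ne hk2]

lemma eD_none_of_fD {l : ℕ} (hl1 : 1 ≤ l) (hl2 : l ≤ N) {b c : Seq N}
    (h : fD N l b = some c) : eD N l b = none := by
  by_cases hc : l + 1 ≤ N
  · rw [fD_some_iff_lt hl1 hc] at h
    cases he : eD N l b with
    | none => rfl
    | some d =>
      rw [eD_some_iff_lt hl1 hc] at he
      rw [h.1] at he
      exact absurd he.1 (by simp)
  · have hl : l = N := by omega
    rw [hl] at h ⊢
    rw [fD_some_iff_N hN] at h
    cases he : eD N N b with
    | none => rfl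
    | some d =>
      rw [eD_some_iff_N hN] at he
      rw [h.1] at he
      exact absurd he.1 (by simp)

lemma fD_none_of_eD {l : ℕ} (hl1 : 1 ≤ l) (hl2 : l ≤ N) {b c : Seq N}
    (h : eD N l b = some c) : fD N l b = none := by
  by_cases hc : l + 1 ≤ N
  · rw [eD_some_iff_lt hl1 hc] at h
    cases he : fD N l b with
    | none => rfl
    | some d =>
      rw [fD_some_iff_lt hl1 hc] at he
      rw [h.1] at he
      exact absurd he.1 (by simp)
  · have hl : l = N := by omega
    rw [hl] at h ⊢
    rw [eD_some_iff_N hN] at h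
    cases he : fD N N b with
    | none => rfl
    | some d =>
      rw [fD_some_iff_N hN] at he
      rw [h.1] at he
      exact absurd he.1 (by simp)

lemma eD_eD {l : ℕ} (hl1 : 1 ≤ l) (hl2 : l ≤ N) {b c : Seq N}
    (h : eD N l b = some c) : eD N l c = none :=
  eD_none_of_fD hN hl1 hl2 (fD_of_eD hN hl1 hl2 h)

lemma fD_fD {l : ℕ} (hl1 : 1 ≤ l) (hl2 : l ≤ N) {b c : Seq N}
    (h : fD N l b = some c) : fD N l c = none :=
  fD_none_of_eD hN hl1 hl2 (eD_of_fD hN hl1 hl2 h)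

omit hN in
lemma opMax_eD_none {l : ℕ} {b : Seq N} (h : eD N l b = none) :
    opMax (eD N l) b = 0 := opMax_eq_zero _ _ h

lemma opMax_eD_some {l : ℕ} (hl1 : 1 ≤ l) (hl2 : l ≤ N) {b c : Seq N}
    (h : eD N l b = some c) : opMax (eD N l) b = 1 :=
  opMax_eq_one _ _ _ h (eD_eD hN hl1 hl2 h)

omit hN in
lemma opMax_fD_none {l : ℕ} {b : Seq N} (h : fD N l b = none) :
    opMax (fD N l) b = 0 := opMax_eq_zero _ _ h

lemma opMax_fD_some {l : ℕ} (hl1 : 1 ≤ l) (hl2 : l ≤ N) {b c : Seq N}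
    (h : fD N l b = some c) : opMax (fD N l) b = 1 :=
  opMax_eq_one _ _ _ h (fD_fD hN hl1 hl2 h)

end excl
section tensor
variable {N : ℕ} (hN : 2 ≤ N)

include hN

lemma tfD_some_iff {l : ℕ} (hl1 : 1 ≤ l) (hl2 : l ≤ N) (p q : Seq N × Seq N) :
    tfD N l p = some q ↔
      ((eD N l p.1 = none ∧ fD N l p.2 ≠ none) ∧ fD N l p.2 = some q.2 ∧ q.1 = p.1) ∨
      (¬(eD N l p.1 = none ∧ fD N l p.2 ≠ none) ∧ fD N l p.1 = some q.1 ∧ q.2 = p.2) := by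
  have hcond : opMax (eD N l) p.1 < opMax (fD N l) p.2 ↔
      (eD N l p.1 = none ∧ fD N l p.2 ≠ none) := by
    cases he : eD N l p.1 with
    | none =>
      cases hf : fD N l p.2 with
      | none => simp [opMax_eD_none he, opMax_fD_none hf]
      | some y => simp [opMax_eD_none he, opMax_fD_some hN hl1 hl2 hf]
    | some x =>
      cases hf : fD N l p.2 with
      | none => simp [opMax_eD_some hN hl1 hl2 he, opMax_fD_none hf]
      | some y => simp [opMax_eD_some hN hl1 hl2 he, opMax_fD_some hN hl1 hl2 hf]
  unfold tfD
  split_ifs with h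
  · rw [hcond] at h
    constructor
    · intro hq
      cases hf : fD N l p.2 with
      | none => rw [hf] at hq; exact absurd hq (by simp [Option.map])
      | some y =>
        rw [hf] at hq
        simp only [Option.map_some, Option.some.injEq] at hq
        subst hq
        exact Or.inl ⟨⟨h.1, by simp⟩, rfl, rfl⟩
    · rintro (⟨_, h2, h3⟩ | ⟨h1, _, _⟩)
      · rw [h2]
        simp only [Option.map_some, Option.some.injEq]
        exact Prod.ext h3.symm rfl
      · exact absurd h h1
  · rw [hcond] at h
    constructor
    · intro hq
      cases hf : fD N l p.1 with
      | none => rw [hf] at hq; exact absurd hq (by simp [Option.map])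
      | some x =>
        rw [hf] at hq
        simp only [Option.map_some, Option.some.injEq] at hq
        subst hq
        exact Or.inr ⟨h, rfl, rfl⟩
    · rintro (⟨h1, _, _⟩ | ⟨_, h2, h3⟩)
      · exact absurd h1 h
      · rw [h2]
        simp only [Option.map_some, Option.some.injEq]
        exact Prod.ext rfl h3.symm

lemma teD_some_iff {l : ℕ} (hl1 : 1 ≤ l) (hl2 : l ≤ N) (p q : Seq N × Seq N) :
    teD N l p = some q ↔
      ((eD N l p.1 = none ∨ fD N l p.2 ≠ none) ∧ eD N l p.2 = some q.2 ∧ q.1 = p.1) ∨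
      (¬(eD N l p.1 = none ∨ fD N l p.2 ≠ none) ∧ eD N l p.1 = some q.1 ∧ q.2 = p.2) := by
  have hcond : opMax (eD N l) p.1 ≤ opMax (fD N l) p.2 ↔
      (eD N l p.1 = none ∨ fD N l p.2 ≠ none) := by
    cases he : eD N l p.1 with
    | none =>
      cases hf : fD N l p.2 with
      | none => simp [opMax_eD_none he, opMax_fD_none hf]
      | some y => simp [opMax_eD_none he, opMax_fD_some hN hl1 hl2 hf]
    | some x =>
      cases hf : fD N l p.2 with
      | none => simp [opMax_eD_some hN hl1 hl2 he, opMax_fD_none hf]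
      | some y => simp [opMax_eD_some hN hl1 hl2 he, opMax_fD_some hN hl1 hl2 hf]
  unfold teD
  split_ifs with h
  · rw [hcond] at h
    constructor
    · intro hq
      cases hf : eD N l p.2 with
      | none => rw [hf] at hq; exact absurd hq (by simp [Option.map])
      | some y =>
        rw [hf] at hq
        simp only [Option.map_some, Option.some.injEq] at hq
        subst hq
        exact Or.inl ⟨h, rfl, rfl⟩
    · rintro (⟨_, h2, h3⟩ | ⟨h1, _, _⟩)
      · rw [h2]
        simp only [Option.map_some, Option.some.injEq]
        exact Prod.ext h3.symm rfl
      · exact absurd h h1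
  · rw [hcond] at h
    constructor
    · intro hq
      cases hf : eD N l p.1 with
      | none => rw [hf] at hq; exact absurd hq (by simp [Option.map])
      | some x =>
        rw [hf] at hq
        simp only [Option.map_some, Option.some.injEq] at hq
        subst hq
        refine Or.inr ⟨?_, rfl, rfl⟩
        rintro (hx | hx)
        · cases hx
        · exact h (Or.inr hx)
    · rintro (⟨h1, _, _⟩ | ⟨_, h2, h3⟩)
      · exact absurd h1 h
      · rw [h2]
        simp only [Option.map_some, Option.some.injEq]
        exact Prod.ext rfl h3.symm

/-- the tensor raising operator is inverse to the tensor lowering operator -/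
lemma teD_iff_tfD {l : ℕ} (hl1 : 1 ≤ l) (hl2 : l ≤ N) (p q : Seq N × Seq N) :
    teD N l p = some q ↔ tfD N l q = some p := by
  constructor
  · intro h
    rw [teD_some_iff hN hl1 hl2] at h
    rw [tfD_some_iff hN hl1 hl2]
    rcases h with ⟨h1, h2, h3⟩ | ⟨h1, h2, h3⟩
    · have hfp2 : fD N l p.2 = none := fD_none_of_eD hN hl1 hl2 h2
      have hep1 : eD N l p.1 = none := by
        rcases h1 with h1 | h1
        · exact h1
        · exact absurd hfp2 h1
      have hfq : fD N l q.2 = some p.2 := fD_of_eD hN hl1 hl2 h2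
      exact Or.inl ⟨⟨by rw [h3]; exact hep1, by rw [hfq]; simp⟩, hfq, h3.symm⟩
    · push_neg at h1
      have hfu : fD N l q.1 = some p.1 := fD_of_eD hN hl1 hl2 h2
      refine Or.inr ⟨?_, hfu, h3.symm⟩
      rintro ⟨-, hfq2⟩
      rw [h3] at hfq2
      exact hfq2 h1.2
  · intro h
    rw [tfD_some_iff hN hl1 hl2] at h
    rw [teD_some_iff hN hl1 hl2]
    rcases h with ⟨⟨hq1, _⟩, h2, h3⟩ | ⟨h1, h2, h3⟩
    · have hep : eD N l p.2 = some q.2 := eD_of_fD hN hl1 hl2 h2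
      exact Or.inl ⟨Or.inl (by rw [h3]; exact hq1), hep, h3.symm⟩
    · have heu : eD N l p.1 = some q.1 := eD_of_fD hN hl1 hl2 h2
      have heq1 : eD N l q.1 = none := eD_none_of_fD hN hl1 hl2 h2
      have hfq2 : fD N l q.2 = none := by
        by_contra hcon
        exact h1 ⟨heq1, hcon⟩
      refine Or.inr ⟨?_, heu, h3.symm⟩
      rw [h3]
      push_neg
      exact ⟨by rw [heu]; simp, hfq2⟩

end tensor
/-- The key prefix-count invariant: `v` has at most one more minus than `u`
in every prefix. -/
def Pcond (N : ℕ) (u v : Seq N) : Prop := ∀ a, mcnt N v a ≤ mcnt N u a + 1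

section moves
variable {N : ℕ}

lemma mcnt_fmove_ne {l : ℕ} (h1 : 1 ≤ l) (h2 : l + 1 ≤ N) {b : Seq N}
    (hbi : b ⟨l - 1, by omega⟩ = false) (hbj : b ⟨l, by omega⟩ = true)
    {a : ℕ} (ha : a ≠ l) :
    mcnt N (Function.update (Function.update b ⟨l - 1, by omega⟩ true) ⟨l, by omega⟩ false) a
      = mcnt N b a := by
  have hij : ((⟨l, by omega⟩ : Fin N)) ≠ (⟨l - 1, by omega⟩ : Fin N) := by
    apply fin_ne_of_val_ne
    simp
    omega
  rcases lt_or_gt_of_ne ha with hlt | hgt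
  · rw [mcnt_update_of_ge _ _ _ (show a ≤ l by omega),
      mcnt_update_of_ge _ _ _ (show a ≤ l - 1 by omega)]
  · have hcj : (Function.update b ⟨l - 1, by omega⟩ true) ⟨l, by omega⟩ = true := by
      rw [Function.update_of_ne hij, hbj]
    rw [mcnt_update_false _ _ (show ((⟨l, by omega⟩ : Fin N) : ℕ) < a by simp; omega) hcj]
    have := mcnt_update_true b (⟨l - 1, by omega⟩ : Fin N)
      (show ((⟨l - 1, by omega⟩ : Fin N) : ℕ) < a by simp; omega) hbi
    omega

lemma mcnt_fmove_eq {l : ℕ} (h1 : 1 ≤ l) (h2 : l + 1 ≤ N) {b : Seq N}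
    (hbi : b ⟨l - 1, by omega⟩ = false) (hbj : b ⟨l, by omega⟩ = true) :
    mcnt N (Function.update (Function.update b ⟨l - 1, by omega⟩ true) ⟨l, by omega⟩ false) l + 1
      = mcnt N b l := by
  rw [mcnt_update_of_ge _ _ _ (show l ≤ l by omega)]
  exact mcnt_update_true b _ (show ((⟨l - 1, by omega⟩ : Fin N) : ℕ) < l by simp; omega) hbi

lemma mcnt_fNmove_le (hN : 2 ≤ N) {b : Seq N}
    (hbi : b ⟨N - 2, by omega⟩ = false) (hbj : b ⟨N - 1, by omega⟩ = false)
    {a : ℕ} (ha : a ≤ N - 2) :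
    mcnt N (Function.update (Function.update b ⟨N - 2, by omega⟩ true) ⟨N - 1, by omega⟩ true) a
      = mcnt N b a := by
  rw [mcnt_update_of_ge _ _ _ (show a ≤ N - 1 by omega),
    mcnt_update_of_ge _ _ _ (show a ≤ N - 2 by omega)]

lemma mcnt_fNmove_mid (hN : 2 ≤ N) {b : Seq N}
    (hbi : b ⟨N - 2, by omega⟩ = false) (hbj : b ⟨N - 1, by omega⟩ = false) :
    mcnt N (Function.update (Function.update b ⟨N - 2, by omega⟩ true) ⟨N - 1, by omega⟩ true)
      (N - 1) + 1 = mcnt N b (N - 1) := by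
  rw [mcnt_update_of_ge _ _ _ (show N - 1 ≤ N - 1 by omega)]
  exact mcnt_update_true b _ (show ((⟨N - 2, by omega⟩ : Fin N) : ℕ) < N - 1 by simp; omega) hbi

lemma mcnt_fNmove_ge (hN : 2 ≤ N) {b : Seq N}
    (hbi : b ⟨N - 2, by omega⟩ = false) (hbj : b ⟨N - 1, by omega⟩ = false)
    {a : ℕ} (ha : N ≤ a) :
    mcnt N (Function.update (Function.update b ⟨N - 2, by omega⟩ true) ⟨N - 1, by omega⟩ true) a
      + 2 = mcnt N b a := by
  have hij : ((⟨N - 1, by omega⟩ : Fin N)) ≠ (⟨N - 2, by omega⟩ : Fin N) := by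
    apply fin_ne_of_val_ne
    simp
    omega
  have hcj : (Function.update b ⟨N - 2, by omega⟩ true) ⟨N - 1, by omega⟩ = false := by
    rw [Function.update_of_ne hij, hbj]
  have h1 := mcnt_update_true (Function.update b ⟨N - 2, by omega⟩ true) (⟨N - 1, by omega⟩ : Fin N)
    (show ((⟨N - 1, by omega⟩ : Fin N) : ℕ) < a by simp; omega) hcj
  have h2 := mcnt_update_true b (⟨N - 2, by omega⟩ : Fin N)
    (show ((⟨N - 2, by omega⟩ : Fin N) : ℕ) < a by simp; omega) hbi
  omega

/-- entry value from prefix counts -/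
lemma mcnt_succ' {a : ℕ} (ha : a < N) (b : Seq N) :
    mcnt N b (a + 1) = mcnt N b a + (if b ⟨a, ha⟩ = false then 1 else 0) :=
  mcnt_succ N b a ha

end moves
section entries
variable {N : ℕ}

lemma mcnt_succ_false {a : ℕ} (ha : a < N) {b : Seq N} (h : b ⟨a, ha⟩ = false) :
    mcnt N b (a + 1) = mcnt N b a + 1 := by
  rw [mcnt_succ N b a ha, if_pos h]

lemma mcnt_succ_true {a : ℕ} (ha : a < N) {b : Seq N} (h : b ⟨a, ha⟩ = true) :
    mcnt N b (a + 1) = mcnt N b a := by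
  rw [mcnt_succ N b a ha, if_neg (by simp [h]), add_zero]

end entries

section invariance
variable {N : ℕ}

/-- invariance of the prefix condition under a tensor lowering move -/
lemma Pcond_iff_tfD (hN : 2 ≤ N) {l : ℕ} (hl1 : 1 ≤ l) (hl2 : l ≤ N)
    {p q : Seq N × Seq N} (h : tfD N l p = some q)
    (hpu : Even (mcnt N p.1 N)) (hpv : Odd (mcnt N p.2 N)) :
    (Pcond N p.1 p.2 ↔ Pcond N q.1 q.2) := by
  obtain ⟨ku, hku⟩ := hpu
  obtain ⟨kv, hkv⟩ := hpv
  rw [tfD_some_iff hN hl1 hl2] at h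
  by_cases hc : l + 1 ≤ N
  · -- case l < N
    have hl1' : l - 1 + 1 = l := by omega
    rcases h with ⟨⟨hev, -⟩, hfv, hq1⟩ | ⟨hcond, hfu, hq2⟩
    · -- f acts on second factor
      rw [fD_some_iff_lt hl1 hc] at hfv
      obtain ⟨hvi, hvj, hq2⟩ := hfv
      have hne : ∀ a, a ≠ l → mcnt N q.2 a = mcnt N p.2 a := by
        intro a ha
        rw [hq2]
        exact mcnt_fmove_ne hl1 hc hvi hvj ha
      have heq : mcnt N q.2 l + 1 = mcnt N p.2 l := by
        rw [hq2]
        exact mcnt_fmove_eq hl1 hc hvi hvj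
      constructor
      · intro hp a
        rw [hq1]
        by_cases ha : a = l
        · rw [ha]
          have := hp l
          omega
        · rw [hne a ha]
          exact hp a
      · intro hq a
        by_cases ha : a = l
        · rw [ha]
          by_contra hcon
          push_neg at hcon
          have e1 : mcnt N p.2 (l - 1 + 1) = mcnt N p.2 (l - 1) + 1 :=
            mcnt_succ_false (by omega) hvi
          rw [hl1'] at e1
          have e2 : mcnt N p.2 (l + 1) = mcnt N p.2 l := mcnt_succ_true (by omega) hvj
          have g1 := hq (l - 1)
          have g2 := hq (l + 1)
          rw [hq1, hne (l - 1) (by omega)] at g1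
          rw [hq1, hne (l + 1) (by omega)] at g2
          cases hui : p.1 ⟨l - 1, by omega⟩ with
          | false =>
            have e3 : mcnt N p.1 (l - 1 + 1) = mcnt N p.1 (l - 1) + 1 :=
              mcnt_succ_false (by omega) hui
            rw [hl1'] at e3
            omega
          | true =>
            cases huj : p.1 ⟨l, by omega⟩ with
            | false =>
              refine absurd hev ?_
              have hsome : eD N l p.1 = some
                  (Function.update (Function.update p.1 ⟨l - 1, by omega⟩ false) ⟨l, by omega⟩ true) :=
                (eD_some_iff_lt hl1 hc _ _).mpr ⟨hui, huj, rfl⟩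
              simp [hsome]
            | true =>
              have e3 : mcnt N p.1 (l - 1 + 1) = mcnt N p.1 (l - 1) :=
                mcnt_succ_true (by omega) hui
              rw [hl1'] at e3
              have e4 : mcnt N p.1 (l + 1) = mcnt N p.1 l := mcnt_succ_true (by omega) huj
              omega
        · have := hq a
          rw [hq1, hne a ha] at this
          exact this
    · -- f acts on first factor
      rw [fD_some_iff_lt hl1 hc] at hfu
      obtain ⟨hui, huj, hq1⟩ := hfu
      have hfv : fD N l p.2 = none := by
        by_contra hfv
        apply hcond
        refine ⟨?_, hfv⟩
        cases he : eD N l p.1 with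
        | none => rfl
        | some d =>
          rw [eD_some_iff_lt hl1 hc] at he
          rw [hui] at he
          exact absurd he.1 (by simp)
      have hne : ∀ a, a ≠ l → mcnt N q.1 a = mcnt N p.1 a := by
        intro a ha
        rw [hq1]
        exact mcnt_fmove_ne hl1 hc hui huj ha
      have heq : mcnt N q.1 l + 1 = mcnt N p.1 l := by
        rw [hq1]
        exact mcnt_fmove_eq hl1 hc hui huj
      constructor
      · intro hp a
        rw [hq2]
        by_cases ha : a = l
        · rw [ha]
          by_contra hcon
          push_neg at hcon
          have e1 : mcnt N p.1 (l - 1 + 1) = mcnt N p.1 (l - 1) + 1 :=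
            mcnt_succ_false (by omega) hui
          rw [hl1'] at e1
          have e2 : mcnt N p.1 (l + 1) = mcnt N p.1 l := mcnt_succ_true (by omega) huj
          have g1 := hp (l - 1)
          have g2 := hp (l + 1)
          have g0 := hp l
          cases hvi : p.2 ⟨l - 1, by omega⟩ with
          | true =>
            have e3 : mcnt N p.2 (l - 1 + 1) = mcnt N p.2 (l - 1) :=
              mcnt_succ_true (by omega) hvi
            rw [hl1'] at e3
            omega
          | false =>
            cases hvj : p.2 ⟨l, by omega⟩ with
            | true =>
              refine absurd hfv ?_
              have hsome : fD N l p.2 = some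
                  (Function.update (Function.update p.2 ⟨l - 1, by omega⟩ true) ⟨l, by omega⟩ false) :=
                (fD_some_iff_lt hl1 hc _ _).mpr ⟨hvi, hvj, rfl⟩
              simp [hsome]
            | false =>
              have e3 : mcnt N p.2 (l - 1 + 1) = mcnt N p.2 (l - 1) + 1 :=
                mcnt_succ_false (by omega) hvi
              rw [hl1'] at e3
              have e4 : mcnt N p.2 (l + 1) = mcnt N p.2 l + 1 :=
                mcnt_succ_false (by omega) hvj
              omega
        · rw [hne a ha]
          exact hp a
      · intro hq a
        have := hq a
        rw [hq2] at this
        by_cases ha : a = l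
        · rw [ha] at this ⊢
          omega
        · rw [hne a ha] at this
          exact this
  · -- case l = N
    obtain rfl : N = l := by omega
    have hN1 : N - 2 + 1 = N - 1 := by omega
    have hN2 : N - 1 + 1 = N := by omega
    rcases h with ⟨⟨hev, -⟩, hfv, hq1⟩ | ⟨hcond, hfu, hq2⟩
    · -- f_N acts on second factor
      rw [fD_some_iff_N hN] at hfv
      obtain ⟨hvi, hvj, hq2⟩ := hfv
      have hle : ∀ a, a ≤ N - 2 → mcnt N q.2 a = mcnt N p.2 a := by
        intro a ha
        rw [hq2]; exact mcnt_fNmove_le hN hvi hvj ha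
      have hmid : mcnt N q.2 (N - 1) + 1 = mcnt N p.2 (N - 1) := by
        rw [hq2]; exact mcnt_fNmove_mid hN hvi hvj
      have hge : ∀ a, N ≤ a → mcnt N q.2 a + 2 = mcnt N p.2 a := by
        intro a ha
        rw [hq2]; exact mcnt_fNmove_ge hN hvi hvj ha
      constructor
      · intro hp a
        rw [hq1]
        rcases le_or_gt a (N - 2) with ha | ha
        · rw [hle a ha]; exact hp a
        · rcases lt_or_ge a N with ha2 | ha2
          · have ha' : a = N - 1 := by omega
            subst ha'
            have := hp (N - 1)
            omega
          · have h1 := hp a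
            have h2 := hge a ha2
            omega
      · intro hq a
        have hq2N : mcnt N q.2 N + 2 = mcnt N p.2 N := hge N (le_refl N)
        have hkey : mcnt N q.2 N + 1 ≤ mcnt N p.1 N := by
          by_contra hcon
          push_neg at hcon
          have hg := hq N
          rw [hq1] at hg
          have hqcnt : mcnt N q.2 N = mcnt N p.1 N + 1 := by omega
          have hq2i : q.2 ⟨N - 2, by omega⟩ = true := by
            rw [hq2]
            have hij : ((⟨N - 2, by omega⟩ : Fin N)) ≠ (⟨N - 1, by omega⟩ : Fin N) := by
              apply fin_ne_of_val_ne; simp; omega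
            rw [Function.update_of_ne hij, Function.update_self]
          have hq2j : q.2 ⟨N - 1, by omega⟩ = true := by
            rw [hq2, Function.update_self]
          have e1 : mcnt N q.2 (N - 2 + 1) = mcnt N q.2 (N - 2) := mcnt_succ_true (by omega) hq2i
          have e2 : mcnt N q.2 (N - 1 + 1) = mcnt N q.2 (N - 1) := mcnt_succ_true (by omega) hq2j
          rw [hN1] at e1
          rw [hN2] at e2
          have g1 := hq (N - 2)
          have g2 := hq (N - 1)
          rw [hq1] at g1 g2
          cases hui : p.1 ⟨N - 2, by omega⟩ with
          | false =>
            have e3 : mcnt N p.1 (N - 2 + 1) = mcnt N p.1 (N - 2) + 1 :=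
              mcnt_succ_false (by omega) hui
            rw [hN1] at e3
            cases hx : p.1 ⟨N - 1, by omega⟩ with
            | false =>
              have e4 := mcnt_succ_false (show N - 1 < N by omega) hx
              rw [hN2] at e4
              omega
            | true =>
              have e4 := mcnt_succ_true (show N - 1 < N by omega) hx
              rw [hN2] at e4
              omega
          | true =>
            cases huj : p.1 ⟨N - 1, by omega⟩ with
            | false =>
              have e3 : mcnt N p.1 (N - 2 + 1) = mcnt N p.1 (N - 2) :=
                mcnt_succ_true (by omega) hui
              rw [hN1] at e3
              have e4 : mcnt N p.1 (N - 1 + 1) = mcnt N p.1 (N - 1) + 1 :=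
                mcnt_succ_false (by omega) huj
              rw [hN2] at e4
              omega
            | true =>
              refine absurd hev ?_
              have hsome : eD N N p.1 = some
                  (Function.update (Function.update p.1 ⟨N - 2, by omega⟩ false) ⟨N - 1, by omega⟩ false) :=
                (eD_some_iff_N hN _ _).mpr ⟨hui, huj, rfl⟩
              simp [hsome]
        rcases le_or_gt a (N - 2) with ha | ha
        · have := hq a
          rw [hq1, hle a ha] at this
          exact this
        · rcases lt_or_ge a N with ha2 | ha2
          · have ha' : a = N - 1 := by omega
            subst ha'
            have hq2j : q.2 ⟨N - 1, by omega⟩ = true := by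
              rw [hq2, Function.update_self]
            have e2 : mcnt N q.2 (N - 1 + 1) = mcnt N q.2 (N - 1) := mcnt_succ_true (by omega) hq2j
            rw [hN2] at e2
            cases hx : p.1 ⟨N - 1, by omega⟩ with
            | false =>
              have e4 := mcnt_succ_false (show N - 1 < N by omega) hx
              rw [hN2] at e4
              omega
            | true =>
              have e4 := mcnt_succ_true (show N - 1 < N by omega) hx
              rw [hN2] at e4
              omega
          · have hs1 : mcnt N p.2 a = mcnt N p.2 N := mcnt_stab N p.2 ha2
            have hs2 : mcnt N p.1 a = mcnt N p.1 N := mcnt_stab N p.1 ha2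
            omega
    · -- f_N acts on first factor
      rw [fD_some_iff_N hN] at hfu
      obtain ⟨hui, huj, hq1⟩ := hfu
      have hfv : fD N N p.2 = none := by
        by_contra hfv
        apply hcond
        refine ⟨?_, hfv⟩
        cases he : eD N N p.1 with
        | none => rfl
        | some d =>
          rw [eD_some_iff_N hN] at he
          rw [hui] at he
          exact absurd he.1 (by simp)
      have hle : ∀ a, a ≤ N - 2 → mcnt N q.1 a = mcnt N p.1 a := by
        intro a ha
        rw [hq1]; exact mcnt_fNmove_le hN hui huj ha
      have hmid : mcnt N q.1 (N - 1) + 1 = mcnt N p.1 (N - 1) := by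
        rw [hq1]; exact mcnt_fNmove_mid hN hui huj
      have hge : ∀ a, N ≤ a → mcnt N q.1 a + 2 = mcnt N p.1 a := by
        intro a ha
        rw [hq1]; exact mcnt_fNmove_ge hN hui huj ha
      have eu1 : mcnt N p.1 (N - 2 + 1) = mcnt N p.1 (N - 2) + 1 :=
        mcnt_succ_false (by omega) hui
      have eu2 : mcnt N p.1 (N - 1 + 1) = mcnt N p.1 (N - 1) + 1 :=
        mcnt_succ_false (by omega) huj
      rw [hN1] at eu1
      rw [hN2] at eu2
      constructor
      · intro hp a
        rw [hq2]
        have hvN : mcnt N p.2 N + 1 ≤ mcnt N p.1 N := by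
          by_contra hcon
          push_neg at hcon
          have g0 := hp N
          have hveq : mcnt N p.2 N = mcnt N p.1 N + 1 := by omega
          have g1 := hp (N - 2)
          cases hb1 : p.2 ⟨N - 2, by omega⟩ with
          | true =>
            have ev1 := mcnt_succ_true (show N - 2 < N by omega) hb1
            rw [hN1] at ev1
            cases hb2 : p.2 ⟨N - 1, by omega⟩ with
            | true =>
              have ev2 := mcnt_succ_true (show N - 1 < N by omega) hb2
              rw [hN2] at ev2
              omega
            | false =>
              have ev2 := mcnt_succ_false (show N - 1 < N by omega) hb2
              rw [hN2] at ev2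
              omega
          | false =>
            have ev1 := mcnt_succ_false (show N - 2 < N by omega) hb1
            rw [hN1] at ev1
            cases hb2 : p.2 ⟨N - 1, by omega⟩ with
            | true =>
              have ev2 := mcnt_succ_true (show N - 1 < N by omega) hb2
              rw [hN2] at ev2
              omega
            | false =>
              refine absurd hfv ?_
              have hsome : fD N N p.2 = some
                  (Function.update (Function.update p.2 ⟨N - 2, by omega⟩ true) ⟨N - 1, by omega⟩ true) :=
                (fD_some_iff_N hN _ _).mpr ⟨hb1, hb2, rfl⟩
              simp [hsome]
        have hvN1 : mcnt N p.2 (N - 1) ≤ mcnt N p.1 (N - 1) := by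
          have hm := mcnt_mono N p.2 (show N - 1 ≤ N by omega)
          omega
        rcases le_or_gt a (N - 2) with ha | ha
        · rw [hle a ha]; exact hp a
        · rcases lt_or_ge a N with ha2 | ha2
          · have ha' : a = N - 1 := by omega
            subst ha'
            omega
          · have hs1 : mcnt N p.2 a = mcnt N p.2 N := mcnt_stab N p.2 ha2
            have h2 := hge a ha2
            have hs2 : mcnt N q.1 a = mcnt N q.1 N := mcnt_stab N q.1 ha2
            have h3 := hge N (le_refl N)
            omega
      · intro hq a
        have := hq a
        rw [hq2] at this
        rcases le_or_gt a (N - 2) with ha | ha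
        · rw [hle a ha] at this; exact this
        · rcases lt_or_ge a N with ha2 | ha2
          · have ha' : a = N - 1 := by omega
            subst ha'
            omega
          · have h2 := hge a ha2
            omega

end invariance
section target
variable {N : ℕ}

lemma mcnt_top (a : ℕ) : mcnt N (top N) a = 0 := by
  unfold mcnt top
  simp

lemma mcnt_lowSeq (hN : 1 ≤ N) (a : ℕ) :
    mcnt N (lowSeq N (N - 1)) a = if N - 1 < a then 1 else 0 := by
  unfold mcnt lowSeq
  split_ifs with h
  · rw [show (Finset.univ.filter
        (fun i : Fin N => (i : ℕ) < a ∧ (decide ((i : ℕ) < N - 1)) = false))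
        = {⟨N - 1, by omega⟩} from ?_]
    · exact Finset.card_singleton _
    · ext i
      simp only [Finset.mem_filter, Finset.mem_univ, true_and, Finset.mem_singleton,
        decide_eq_false_iff_not, not_lt, Fin.ext_iff, Fin.val_mk]
      have := i.isLt
      omega
  · rw [Finset.card_eq_zero]
    apply Finset.filter_false_of_mem
    intro i _
    simp only [decide_eq_false_iff_not, not_lt, not_and]
    intro h1 h2
    omega

lemma all_true_of_mcnt_zero {b : Seq N} {a : ℕ} (h : mcnt N b a = 0)
    {i : Fin N} (hi : (i : ℕ) < a) : b i = true := by
  unfold mcnt at h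
  rw [Finset.card_eq_zero] at h
  by_contra hb
  have : i ∈ Finset.univ.filter (fun i : Fin N => (i : ℕ) < a ∧ b i = false) := by
    simp only [Finset.mem_filter, Finset.mem_univ, true_and]
    exact ⟨hi, by simpa using hb⟩
  rw [h] at this
  exact absurd this (Finset.notMem_empty i)

lemma exists_false_of_mcnt_pos {b : Seq N} {a : ℕ} (h : 0 < mcnt N b a) :
    ∃ i : Fin N, (i : ℕ) < a ∧ b i = false := by
  unfold mcnt at h
  rw [Finset.card_pos] at h
  obtain ⟨i, hi⟩ := h
  simp only [Finset.mem_filter, Finset.mem_univ, true_and] at hi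
  exact ⟨i, hi⟩

lemma two_false_mcnt {b : Seq N} {i j : Fin N} (hij : i ≠ j)
    (hi : b i = false) (hj : b j = false) : 2 ≤ mcnt N b N := by
  unfold mcnt
  rw [show (2 : ℕ) = 1 + 1 from rfl, Nat.add_one_le_iff]
  rw [Finset.one_lt_card]
  refine ⟨i, ?_, j, ?_, hij⟩ <;>
    simp only [Finset.mem_filter, Finset.mem_univ, true_and] <;>
    [exact ⟨i.isLt, hi⟩; exact ⟨j.isLt, hj⟩]

/-- falses propagate to the right if there is no descent -/
lemma all_false_after {b : Seq N}
    (hb : ∀ l (h1 : 1 ≤ l) (h2 : l + 1 ≤ N),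
      ¬(b ⟨l - 1, by omega⟩ = false ∧ b ⟨l, by omega⟩ = true)) :
    ∀ j (hj : j < N) i (hij : i ≤ j), b ⟨i, by omega⟩ = false → b ⟨j, hj⟩ = false := by
  intro j
  induction j with
  | zero =>
    intro hj i hij hbi
    have : i = 0 := by omega
    subst this
    exact hbi
  | succ m ih =>
    intro hj i hij hbi
    by_cases hi : i = m + 1
    · subst hi
      exact hbi
    · have him : i ≤ m := by omega
      have hbm : b ⟨m, by omega⟩ = false := ih (by omega) i him hbi
      cases hb2 : b ⟨m + 1, hj⟩ with
      | false => rfl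
      | true =>
        exact absurd ⟨hbm, hb2⟩ (hb (m + 1) (by omega) (by omega))

end target

section phi
variable {N : ℕ}

/-- potential function: total weighted minus count -/
def Phi (N : ℕ) (b : Seq N) : ℕ := ∑ a ∈ Finset.range (N + 1), mcnt N b a

lemma Phi_fmove {l : ℕ} (hl1 : 1 ≤ l) (hc : l + 1 ≤ N) {b : Seq N}
    (hbi : b ⟨l - 1, by omega⟩ = false) (hbj : b ⟨l, by omega⟩ = true) :
    Phi N (Function.update (Function.update b ⟨l - 1, by omega⟩ true) ⟨l, by omega⟩ false) < Phi N b := by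
  unfold Phi
  apply Finset.sum_lt_sum
  · intro a _
    by_cases ha : a = l
    · subst ha
      have := mcnt_fmove_eq hl1 hc hbi hbj
      omega
    · rw [mcnt_fmove_ne hl1 hc hbi hbj ha]
  · refine ⟨l, Finset.mem_range.mpr (by omega), ?_⟩
    have := mcnt_fmove_eq hl1 hc hbi hbj
    omega

lemma Phi_fNmove (hN : 2 ≤ N) {b : Seq N}
    (hbi : b ⟨N - 2, by omega⟩ = false) (hbj : b ⟨N - 1, by omega⟩ = false) :
    Phi N (Function.update (Function.update b ⟨N - 2, by omega⟩ true) ⟨N - 1, by omega⟩ true) < Phi N b := by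
  unfold Phi
  apply Finset.sum_lt_sum
  · intro a _
    rcases le_or_gt a (N - 2) with ha | ha
    · rw [mcnt_fNmove_le hN hbi hbj ha]
    · rcases lt_or_ge a N with ha2 | ha2
      · have ha' : a = N - 1 := by omega
        subst ha'
        have := mcnt_fNmove_mid hN hbi hbj
        omega
      · have := mcnt_fNmove_ge hN hbi hbj ha2
        omega
  · refine ⟨N, Finset.mem_range.mpr (by omega), ?_⟩
    have := mcnt_fNmove_ge hN hbi hbj (le_refl N)
    omega

lemma Phi_tfD (hN : 2 ≤ N) {l : ℕ} (hl1 : 1 ≤ l) (hl2 : l ≤ N)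
    {p q : Seq N × Seq N} (h : tfD N l p = some q) :
    Phi N q.1 + Phi N q.2 < Phi N p.1 + Phi N p.2 := by
  rw [tfD_some_iff hN hl1 hl2] at h
  by_cases hc : l + 1 ≤ N
  · rcases h with ⟨-, hfv, hq1⟩ | ⟨-, hfu, hq2⟩
    · rw [fD_some_iff_lt hl1 hc] at hfv
      obtain ⟨hvi, hvj, hq2⟩ := hfv
      rw [hq1, hq2]
      have := Phi_fmove hl1 hc hvi hvj
      omega
    · rw [fD_some_iff_lt hl1 hc] at hfu
      obtain ⟨hui, huj, hq1⟩ := hfu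
      rw [hq2, hq1]
      have := Phi_fmove hl1 hc hui huj
      omega
  · obtain rfl : N = l := by omega
    rcases h with ⟨-, hfv, hq1⟩ | ⟨-, hfu, hq2⟩
    · rw [fD_some_iff_N hN] at hfv
      obtain ⟨hvi, hvj, hq2⟩ := hfv
      rw [hq1, hq2]
      have := Phi_fNmove hN hvi hvj
      omega
    · rw [fD_some_iff_N hN] at hfu
      obtain ⟨hui, huj, hq1⟩ := hfu
      rw [hq2, hq1]
      have := Phi_fNmove hN hui huj
      omega

end phi
section conn
variable {N : ℕ}

/-- the full invariant -/
def Good (N : ℕ) (p : Seq N × Seq N) : Prop :=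
  Even (mcnt N p.1 N) ∧ Odd (mcnt N p.2 N) ∧ Pcond N p.1 p.2

lemma tfD_mcntN (hN : 2 ≤ N) {l : ℕ} (hl1 : 1 ≤ l) (hl2 : l ≤ N)
    {p q : Seq N × Seq N} (h : tfD N l p = some q) :
    (mcnt N q.1 N = mcnt N p.1 N ∨ mcnt N q.1 N + 2 = mcnt N p.1 N) ∧
    (mcnt N q.2 N = mcnt N p.2 N ∨ mcnt N q.2 N + 2 = mcnt N p.2 N) := by
  rw [tfD_some_iff hN hl1 hl2] at h
  by_cases hc : l + 1 ≤ N
  · rcases h with ⟨-, hfv, hq1⟩ | ⟨-, hfu, hq2⟩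
    · rw [fD_some_iff_lt hl1 hc] at hfv
      obtain ⟨hvi, hvj, hq2⟩ := hfv
      rw [hq1, hq2]
      exact ⟨Or.inl rfl, Or.inl (mcnt_fmove_ne hl1 hc hvi hvj (by omega))⟩
    · rw [fD_some_iff_lt hl1 hc] at hfu
      obtain ⟨hui, huj, hq1⟩ := hfu
      rw [hq2, hq1]
      exact ⟨Or.inl (mcnt_fmove_ne hl1 hc hui huj (by omega)), Or.inl rfl⟩
  · obtain rfl : N = l := by omega
    rcases h with ⟨-, hfv, hq1⟩ | ⟨-, hfu, hq2⟩
    · rw [fD_some_iff_N hN] at hfv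
      obtain ⟨hvi, hvj, hq2⟩ := hfv
      rw [hq1, hq2]
      exact ⟨Or.inl rfl, Or.inr (mcnt_fNmove_ge hN hvi hvj (le_refl N))⟩
    · rw [fD_some_iff_N hN] at hfu
      obtain ⟨hui, huj, hq1⟩ := hfu
      rw [hq2, hq1]
      exact ⟨Or.inr (mcnt_fNmove_ge hN hui huj (le_refl N)), Or.inl rfl⟩

lemma Good_iff_tfD (hN : 2 ≤ N) {l : ℕ} (hl1 : 1 ≤ l) (hl2 : l ≤ N)
    {p q : Seq N × Seq N} (h : tfD N l p = some q) :
    Good N p ↔ Good N q := by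
  obtain ⟨c1, c2⟩ := tfD_mcntN hN hl1 hl2 h
  constructor
  · rintro ⟨he, ho, hP⟩
    refine ⟨?_, ?_, (Pcond_iff_tfD hN hl1 hl2 h he ho).mp hP⟩
    · rw [Nat.even_iff] at he ⊢; omega
    · rw [Nat.odd_iff] at ho ⊢; omega
  · rintro ⟨he, ho, hP⟩
    have he' : Even (mcnt N p.1 N) := by rw [Nat.even_iff] at he ⊢; omega
    have ho' : Odd (mcnt N p.2 N) := by rw [Nat.odd_iff] at ho ⊢; omega
    exact ⟨he', ho', (Pcond_iff_tfD hN hl1 hl2 h he' ho').mpr hP⟩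

lemma Good_iff_conn (hN : 2 ≤ N) {p q : Seq N × Seq N} (h : ConnD N p q) :
    Good N p ↔ Good N q := by
  induction h with
  | rel x y hr =>
    obtain ⟨l, hl1, hl2, hte | htf⟩ := hr
    · rw [teD_iff_tfD hN hl1 hl2] at hte
      exact (Good_iff_tfD hN hl1 hl2 hte).symm
    · exact Good_iff_tfD hN hl1 hl2 htf
  | refl x => exact Iff.rfl
  | symm x y _ ih => exact ih.symm
  | trans x y z _ _ ih1 ih2 => exact ih1.trans ih2

lemma good_target (hN : 2 ≤ N) : Good N (top N, lowSeq N (N - 1)) := by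
  refine ⟨?_, ?_, ?_⟩
  · simp [mcnt_top]
  · rw [show mcnt N (top N, lowSeq N (N - 1)).2 N = 1 from ?_]
    · exact odd_one
    · rw [mcnt_lowSeq (by omega), if_pos (by omega)]
  · intro a
    show mcnt N (lowSeq N (N - 1)) a ≤ mcnt N (top N) a + 1
    rw [mcnt_top, mcnt_lowSeq (by omega)]
    split_ifs <;> omega

lemma tfD_none_elim (hN : 2 ≤ N) {l : ℕ} (hl1 : 1 ≤ l) (hl2 : l ≤ N)
    {p : Seq N × Seq N} (h : tfD N l p = none) :
    fD N l p.1 = none ∧ (eD N l p.1 ≠ none ∨ fD N l p.2 = none) := by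
  unfold tfD at h
  split_ifs at h with hcnd
  · exfalso
    cases hf : fD N l p.2 with
    | none =>
      rw [opMax_fD_none hf] at hcnd
      omega
    | some y =>
      rw [hf] at h
      simp at h
  · constructor
    · cases hf : fD N l p.1 with
      | none => rfl
      | some x =>
        rw [hf] at h
        simp at h
    · by_contra hcon
      push_neg at hcon
      obtain ⟨heq, hf2⟩ := hcon
      apply hcnd
      cases hf : fD N l p.2 with
      | none => exact absurd hf hf2
      | some y =>
        rw [opMax_eD_none heq, opMax_fD_some hN hl1 hl2 hf]
        omega

lemma lowest_is_target (hN : 2 ≤ N) {p : Seq N × Seq N} (hg : Good N p)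
    (hnone : ∀ l, 1 ≤ l → l ≤ N → tfD N l p = none) :
    p = (top N, lowSeq N (N - 1)) := by
  obtain ⟨he, ho, hP⟩ := hg
  have hN2 : N - 1 + 1 = N := by omega
  have hfu : ∀ l (h1 : 1 ≤ l) (h2 : l + 1 ≤ N),
      ¬(p.1 ⟨l - 1, by omega⟩ = false ∧ p.1 ⟨l, by omega⟩ = true) := by
    intro l h1 h2 hcon
    have h3 := (tfD_none_elim hN h1 (by omega) (hnone l h1 (by omega))).1
    have hsome : fD N l p.1 = some
        (Function.update (Function.update p.1 ⟨l - 1, by omega⟩ true) ⟨l, by omega⟩ false) :=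
      (fD_some_iff_lt h1 h2 _ _).mpr ⟨hcon.1, hcon.2, rfl⟩
    rw [h3] at hsome
    cases hsome
  have hu_top : p.1 = top N := by
    have hcnt : mcnt N p.1 N = 0 := by
      by_contra hc0
      have h2 : 2 ≤ mcnt N p.1 N := by
        rw [Nat.even_iff] at he
        omega
      have hle : mcnt N p.1 N ≤ mcnt N p.1 (N - 1) + 1 := by
        cases hx : p.1 ⟨N - 1, by omega⟩ with
        | false =>
          have e := mcnt_succ_false (show N - 1 < N by omega) hx
          rw [hN2] at e
          omega
        | true =>
          have e := mcnt_succ_true (show N - 1 < N by omega) hx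
          rw [hN2] at e
          omega
      obtain ⟨i, hi, hbi⟩ := exists_false_of_mcnt_pos (show 0 < mcnt N p.1 (N - 1) by omega)
      have hN2f : p.1 ⟨N - 2, by omega⟩ = false :=
        all_false_after hfu (N - 2) (by omega) (i : ℕ) (by omega) hbi
      have hN1f : p.1 ⟨N - 1, by omega⟩ = false :=
        all_false_after hfu (N - 1) (by omega) (i : ℕ) (by omega) hbi
      have h3 := (tfD_none_elim hN (by omega) (le_refl N) (hnone N (by omega) (le_refl N))).1
      have hsome : fD N N p.1 = some
          (Function.update (Function.update p.1 ⟨N - 2, by omega⟩ true) ⟨N - 1, by omega⟩ true) :=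
        (fD_some_iff_N hN _ _).mpr ⟨hN2f, hN1f, rfl⟩
      rw [h3] at hsome
      cases hsome
    funext i
    exact all_true_of_mcnt_zero hcnt i.isLt
  have hfv : ∀ l (h1 : 1 ≤ l) (h2 : l + 1 ≤ N),
      ¬(p.2 ⟨l - 1, by omega⟩ = false ∧ p.2 ⟨l, by omega⟩ = true) := by
    intro l h1 h2 hcon
    have helim := (tfD_none_elim hN h1 (by omega) (hnone l h1 (by omega))).2
    have heu : eD N l p.1 = none := by
      cases hx : eD N l p.1 with
      | none => rfl
      | some c =>
        rw [eD_some_iff_lt h1 h2] at hx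
        rw [hu_top] at hx
        exact absurd hx.2.1 (by simp [top])
    rcases helim with hx | hx
    · exact hx heu
    · have hsome : fD N l p.2 = some
          (Function.update (Function.update p.2 ⟨l - 1, by omega⟩ true) ⟨l, by omega⟩ false) :=
        (fD_some_iff_lt h1 h2 _ _).mpr ⟨hcon.1, hcon.2, rfl⟩
      rw [hx] at hsome
      cases hsome
  have hvpos : 0 < mcnt N p.2 N := by
    rw [Nat.odd_iff] at ho
    omega
  have hvle : mcnt N p.2 N ≤ 1 := by
    have h2 := hP N
    rw [hu_top, mcnt_top] at h2
    omega
  have hlast : p.2 ⟨N - 1, by omega⟩ = false := by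
    obtain ⟨i, hi, hbi⟩ := exists_false_of_mcnt_pos hvpos
    exact all_false_after hfv (N - 1) (by omega) (i : ℕ) (by omega) hbi
  have hbefore : ∀ i : Fin N, (i : ℕ) < N - 1 → p.2 i = true := by
    intro i hi
    cases hb : p.2 i with
    | true => rfl
    | false =>
      have hne : i ≠ (⟨N - 1, by omega⟩ : Fin N) := by
        apply fin_ne_of_val_ne
        simp
        omega
      have := two_false_mcnt hne hb hlast
      omega
  have hv : p.2 = lowSeq N (N - 1) := by
    funext i
    by_cases hi : (i : ℕ) < N - 1
    · rw [hbefore i hi]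
      simp [lowSeq, hi]
    · have hieq : i = (⟨N - 1, by omega⟩ : Fin N) := by
        apply Fin.ext
        have := i.isLt
        simp
        omega
      rw [hieq, hlast]
      simp [lowSeq]
  exact Prod.ext hu_top hv

lemma reach (hN : 2 ≤ N) : ∀ n (p : Seq N × Seq N), Phi N p.1 + Phi N p.2 = n → Good N p →
    ConnD N p (top N, lowSeq N (N - 1)) := by
  intro n
  induction n using Nat.strong_induction_on with
  | _ n ih =>
    intro p hphi hg
    by_cases hnone : ∀ l, 1 ≤ l → l ≤ N → tfD N l p = none
    · rw [lowest_is_target hN hg hnone]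
      exact Relation.EqvGen.refl _
    · push_neg at hnone
      obtain ⟨l, hl1, hl2, hne⟩ := hnone
      cases hq : tfD N l p with
      | none => exact absurd hq hne
      | some q =>
        have hstep : ConnD N p q := Relation.EqvGen.rel _ _ ⟨l, hl1, hl2, Or.inr hq⟩
        have hlt := Phi_tfD hN hl1 hl2 hq
        have hgq : Good N q := (Good_iff_tfD hN hl1 hl2 hq).mp hg
        exact Relation.EqvGen.trans _ _ _ hstep (ih _ (by omega) q rfl hgq)

lemma connD_iff_Pcond (hN : 2 ≤ N) (u v : Seq N)
    (hu : Even (mcnt N u N)) (hv : Odd (mcnt N v N)) :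
    ConnD N (u, v) (top N, lowSeq N (N - 1)) ↔ Pcond N u v := by
  constructor
  · intro h
    exact ((Good_iff_conn hN h).mpr (good_target hN)).2.2
  · intro hP
    exact reach hN _ (u, v) rfl ⟨hu, hv, hP⟩

end conn
section colA
variable {N : ℕ}

/-- the letter encoding of the `i`-th entry -/
def letter (N : ℕ) (b : Seq N) (i : Fin N) : ℕ :=
  if b i then (i : ℕ) + 1 else 2 * N - (i : ℕ)

lemma letter_injective (b : Seq N) : Function.Injective (letter N b) := by
  intro i j h
  unfold letter at h
  have hi := i.isLt
  have hj := j.isLt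
  apply Fin.ext
  split_ifs at h <;> omega

lemma colList_eq (b : Seq N) :
    colList N b = Finset.sort (Finset.image (letter N b) Finset.univ) (· ≤ ·) := rfl

lemma colList_length (b : Seq N) : (colList N b).length = N := by
  rw [colList_eq, Finset.length_sort, Finset.card_image_of_injective _ (letter_injective b)]
  simp

/-- counting letters below a threshold -/
def cnt (N : ℕ) (b : Seq N) (t : ℕ) : ℕ :=
  (Finset.univ.filter (fun i : Fin N => letter N b i ≤ t)).card

lemma filter_length_eq_cnt (b : Seq N) (t : ℕ) :
    ((colList N b).filter (fun x => decide (x ≤ t))).length = cnt N b t := by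
  have h1 : ((colList N b).filter (fun x => decide (x ≤ t)) : Multiset ℕ)
      = Multiset.filter (fun x => x ≤ t) (colList N b : Multiset ℕ) :=
    (Multiset.filter_coe _ _).symm
  have h2 : ((colList N b) : Multiset ℕ) = (Finset.image (letter N b) Finset.univ).1 := by
    rw [colList_eq]
    exact Finset.sort_eq _ _
  have h3 : ((colList N b).filter (fun x => decide (x ≤ t))).length
      = Multiset.card (Multiset.filter (fun x => x ≤ t) (colList N b : Multiset ℕ)) := by
    rw [← h1, Multiset.coe_card]
  rw [h3, h2]
  have h4 : Multiset.filter (fun x => x ≤ t) (Finset.image (letter N b) Finset.univ).1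
      = ((Finset.image (letter N b) Finset.univ).filter (fun x => x ≤ t)).1 := rfl
  rw [h4]
  have h5 : ((Finset.image (letter N b) Finset.univ).filter (fun x => x ≤ t))
      = Finset.image (letter N b) (Finset.univ.filter (fun i => letter N b i ≤ t)) := by
    ext x
    simp only [Finset.mem_filter, Finset.mem_image, Finset.mem_univ, true_and]
    constructor
    · rintro ⟨⟨i, rfl⟩, h⟩
      exact ⟨i, h, rfl⟩
    · rintro ⟨i, h, rfl⟩
      exact ⟨⟨i, rfl⟩, h⟩
  show Multiset.card ((Finset.image (letter N b) Finset.univ).filter (fun x => x ≤ t)).val = _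
  rw [h5]
  rw [show Multiset.card (Finset.image (letter N b)
      (Finset.univ.filter (fun i => letter N b i ≤ t))).val
    = (Finset.image (letter N b) (Finset.univ.filter (fun i => letter N b i ≤ t))).card from rfl]
  rw [Finset.card_image_of_injective _ (letter_injective b)]
  rfl

/-- key lemma: entries of a strictly sorted list versus counting -/
lemma sorted_getD_le_iff : ∀ {L : List ℕ}, L.Pairwise (· < ·) → ∀ {r : ℕ}, r < L.length →
    ∀ t, (L.getD r 0 ≤ t ↔ r + 1 ≤ (L.filter (fun x => decide (x ≤ t))).length) := by
  intro L
  induction L with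
  | nil =>
    intro _ r hr
    simp at hr
  | cons x L ih =>
    intro hs r hr t
    rw [List.pairwise_cons] at hs
    obtain ⟨hx, hs'⟩ := hs
    cases r with
    | zero =>
      simp only [List.getD_cons_zero, List.filter_cons]
      constructor
      · intro hxt
        rw [if_pos (by simpa using hxt)]
        simp
      · intro hlen
        by_contra hxt
        push_neg at hxt
        rw [if_neg (by simpa using (not_le.mpr hxt))] at hlen
        have : L.filter (fun y => decide (y ≤ t)) = [] := by
          apply List.filter_eq_nil_iff.mpr
          intro y hy
          simp only [decide_eq_true_eq, not_le]
          exact lt_trans hxt (hx y hy)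
        rw [this] at hlen
        simp at hlen
    | succ r' =>
      have hr' : r' < L.length := by simpa using hr
      rw [List.getD_cons_succ, List.filter_cons]
      by_cases hxt : x ≤ t
      · rw [if_pos (by simpa using hxt)]
        rw [List.length_cons]
        rw [ih hs' hr' t]
        omega
      · rw [if_neg (by simpa using hxt)]
        have hnil : L.filter (fun y => decide (y ≤ t)) = [] := by
          apply List.filter_eq_nil_iff.mpr
          intro y hy
          simp only [decide_eq_true_eq, not_le]
          exact lt_trans (not_le.mp hxt) (hx y hy)
        rw [hnil]
        simp only [List.length_nil]
        constructor
        · intro hle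
          exfalso
          have hmem : L.getD r' 0 ∈ L := by
            rw [List.getD_eq_getElem _ _ hr']
            exact List.getElem_mem hr'
          exact absurd hle (not_le.mpr (lt_trans (not_le.mp hxt) (hx _ hmem)))
        · intro hc
          omega

lemma colList_sorted (b : Seq N) : (colList N b).Pairwise (· < ·) := by
  rw [colList_eq]
  exact (Finset.sortedLT_sort _).pairwise

/-- the master counting equivalence for columns -/
lemma colList_getD_le_iff (b : Seq N) {r : ℕ} (hr : r < N) (t : ℕ) :
    (colList N b).getD r 0 ≤ t ↔ r + 1 ≤ cnt N b t := by
  rw [← filter_length_eq_cnt b t]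
  exact sorted_getD_le_iff (colList_sorted b) (by rw [colList_length]; exact hr) t

lemma card_val_lt (t : ℕ) (ht : t ≤ N) :
    (Finset.univ.filter (fun i : Fin N => (i : ℕ) < t)).card = t := by
  induction t with
  | zero => simp
  | succ m ihm =>
    have hm : m ≤ N := by omega
    have : (Finset.univ.filter (fun i : Fin N => (i : ℕ) < m + 1))
        = insert (⟨m, by omega⟩ : Fin N) (Finset.univ.filter (fun i : Fin N => (i : ℕ) < m)) := by
      ext i
      simp only [Finset.mem_filter, Finset.mem_univ, true_and, Finset.mem_insert, Fin.ext_iff]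
      omega
    rw [this, Finset.card_insert_of_notMem (by simp), ihm hm]

/-- count formula for small thresholds -/
lemma cnt_small (b : Seq N) {t : ℕ} (ht : t ≤ N) : cnt N b t + mcnt N b t = t := by
  unfold cnt mcnt
  have h1 : (Finset.univ.filter (fun i : Fin N => letter N b i ≤ t))
      = (Finset.univ.filter (fun i : Fin N => (i : ℕ) < t)).filter (fun i => b i = true) := by
    rw [Finset.filter_filter]
    apply Finset.filter_congr
    intro i _
    unfold letter
    have := i.isLt
    cases hb : b i with
    | true =>
      rw [if_pos rfl]
      simp only [eq_self_iff_true, and_true]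
      omega
    | false =>
      rw [if_neg (by simp)]
      simp only [Bool.false_eq_true, and_false, iff_false, not_le]
      omega
  have h2 : (Finset.univ.filter (fun i : Fin N => (i : ℕ) < t ∧ b i = false))
      = (Finset.univ.filter (fun i : Fin N => (i : ℕ) < t)).filter (fun i => ¬(b i = true)) := by
    rw [Finset.filter_filter]
    apply Finset.filter_congr
    intro i _
    cases hb : b i <;> simp
  rw [h1, h2, Finset.card_filter_add_card_filter_not, card_val_lt t ht]

/-- count formula for large thresholds -/
lemma cnt_large (b : Seq N) {t : ℕ} (ht : N ≤ t) : cnt N b t + mcnt N b (2 * N - t) = N := by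
  unfold cnt mcnt
  have h2 : (Finset.univ.filter (fun i : Fin N => (i : ℕ) < 2 * N - t ∧ b i = false))
      = Finset.univ.filter (fun i : Fin N => ¬(letter N b i ≤ t)) := by
    apply Finset.filter_congr
    intro i _
    unfold letter
    have := i.isLt
    cases hb : b i with
    | true =>
      rw [if_pos rfl]
      simp only [Bool.true_eq_false, and_false, false_iff, not_not, not_le]
      omega
    | false =>
      rw [if_neg (by simp)]
      simp only [eq_self_iff_true, and_true]
      omega
  rw [h2, Finset.card_filter_add_card_filter_not]
  simp

end colA
section semiA
variable {N : ℕ}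

lemma preceqD_le {x y : ℕ} (h : preceqD N x y) : x ≤ y := by
  rcases h with rfl | ⟨h, -⟩
  · exact le_refl x
  · exact h.le

lemma cnt_le_of_Pcond {u v : Seq N} (hP : Pcond N u v) (t : ℕ) :
    cnt N u t ≤ cnt N v t + 1 := by
  rcases le_or_gt t N with ht | ht
  · have h1 := cnt_small u ht
    have h2 := cnt_small v ht
    have h3 := hP t
    omega
  · have h1 := cnt_large u ht.le
    have h2 := cnt_large v ht.le
    have h3 := hP (2 * N - t)
    omega

lemma mcnt_step (b : Seq N) (hN : 1 ≤ N) : mcnt N b N ≤ mcnt N b (N - 1) + 1 := by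
  have hN2 : N - 1 + 1 = N := by omega
  cases hx : b ⟨N - 1, by omega⟩ with
  | false =>
    have e := mcnt_succ_false (show N - 1 < N by omega) hx
    rw [hN2] at e
    omega
  | true =>
    have e := mcnt_succ_true (show N - 1 < N by omega) hx
    rw [hN2] at e
    omega

lemma kSemi_iff_Pcond (hN : 2 ≤ N) (u v : Seq N)
    (hu : Even (mcnt N u N)) (hv : Odd (mcnt N v N)) :
    kSemiD N (N - 1) (colList N u) (colList N v) ↔ Pcond N u v := by
  constructor
  · rintro ⟨-, hsemi⟩
    suffices key : ∀ a, a ≤ N → mcnt N v a ≤ mcnt N u a + 1 by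
      intro a
      rcases le_or_gt a N with h | h
      · exact key a h
      · rw [mcnt_stab N v h.le, mcnt_stab N u h.le]
        exact key N (le_refl N)
    intro a haN
    have h1 := cnt_large u (show N ≤ 2 * N - a by omega)
    have h2 := cnt_large v (show N ≤ 2 * N - a by omega)
    rw [show 2 * N - (2 * N - a) = a by omega] at h1 h2
    suffices hc : cnt N u (2 * N - a) ≤ cnt N v (2 * N - a) + 1 by omega
    set t := 2 * N - a with hts
    by_cases hm : cnt N u t ≤ 1
    · omega
    · push_neg at hm
      set r := cnt N u t - 1 with hrs
      have hcu : cnt N u t ≤ N := by omega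
      have hr1 : 1 ≤ r := by omega
      have hr2 : r ≤ N - 1 := by omega
      have hA : (colList N u).getD r 0 ≤ t :=
        (colList_getD_le_iff u (show r < N by omega) t).mpr (by omega)
      have hsr := hsemi r hr1 hr2
      rw [show N - (N - 1) + r - 1 = r by omega] at hsr
      have hC : (colList N v).getD (r - 1) 0 ≤ t := le_trans (preceqD_le hsr) hA
      have := (colList_getD_le_iff v (show r - 1 < N by omega) t).mp hC
      omega
  · intro hP
    refine ⟨by omega, ?_⟩
    intro r hr1 hr2
    rw [show N - (N - 1) + r - 1 = r by omega]
    set t := (colList N u).getD r 0 with hts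
    have hrN : r < N := by omega
    have hA : r + 1 ≤ cnt N u t := (colList_getD_le_iff u hrN t).mp (le_refl t)
    have hcnt := cnt_le_of_Pcond hP t
    have hC : (colList N v).getD (r - 1) 0 ≤ t := by
      apply (colList_getD_le_iff v (show r - 1 < N by omega) t).mpr
      omega
    rcases eq_or_lt_of_le hC with heq | hlt
    · exact Or.inl heq
    · refine Or.inr ⟨hlt, ?_⟩
      rintro ⟨hCN, hAN1⟩
      -- parity contradiction
      have hv1 : r - 1 + 1 ≤ cnt N v N :=
        (colList_getD_le_iff v (show r - 1 < N by omega) N).mp (by omega)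
      have hv2 : cnt N v (N - 1) ≤ r - 1 := by
        by_contra hcon
        push_neg at hcon
        have := (colList_getD_le_iff v (show r - 1 < N by omega) (N - 1)).mpr (by omega)
        omega
      have hu1 : r + 1 ≤ cnt N u (N + 1) :=
        (colList_getD_le_iff u hrN (N + 1)).mp (by omega)
      have hu2 : cnt N u N ≤ r := by
        by_contra hcon
        push_neg at hcon
        have := (colList_getD_le_iff u hrN N).mpr (by omega)
        omega
      have f1 := cnt_small v (le_refl N)
      have f2 := cnt_small v (show N - 1 ≤ N by omega)
      have f3 := cnt_large u (show N ≤ N + 1 by omega)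
      rw [show 2 * N - (N + 1) = N - 1 by omega] at f3
      have f4 := cnt_small u (le_refl N)
      have m1 := mcnt_mono N v (show N - 1 ≤ N by omega)
      have m2 := mcnt_step u (by omega)
      rw [Nat.even_iff] at hu
      rw [Nat.odd_iff] at hv
      omega

end semiA
/-- Koga's criterion, type `D`, case (2B).  For `N ≥ 2`, `u ∈ B_sp^+`
and `v ∈ B_sp^−`, the element `u ⊗ v` lies in the connected component of
`(+,…,+) ⊗ (+^{N−1}, −)` iff the pair of columns `(t(u), t(v))` is
`(N−1)`-semistandard. -/
theorem koga_D_2B (N : ℕ) (hN : 2 ≤ N) (u v : Seq N)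
    (hu : BspPlus N u) (hv : BspMinus N v) :
    ConnD N (u, v) (top N, lowSeq N (N - 1)) ↔
      kSemiD N (N - 1) (colList N u) (colList N v) := by
  have hu' : Even (mcnt N u N) := by rw [← minusCount_eq_mcnt]; exact hu
  have hv' : Odd (mcnt N v N) := by rw [← minusCount_eq_mcnt]; exact hv
  exact (connD_iff_Pcond hN u v hu' hv').trans (kSemi_iff_Pcond hN u v hu' hv').symm

end CrystalPaper
end

section
/- Let N ≥ 2 be even, and let M'_N = {(b,k) : k ∈ ℤ_{≥0}, b ∈ B_sp^− if k is even, b ∈ B_sp^+ if k is odd} be the analogous model of the crystal base B(−ω_{N−1}) of the U_q(D(N,1))-module V(−ω_{N−1}), with operators given by the same formulas as on M_N. Then in M_N × M'_N with the tensor-product operators, the elements x ⊗ y satisfying f̃_i(x ⊗ y) = 0 for all 0 ≤ i ≤ N are exactly: ((+,…,+), 0) ⊗ ((+^{2j+1}, −^{N−2j−1}), 0) for each 0 ≤ j ≤ (N−2)/2, where (+^{2j+1}, −^{N−2j−1}) has first 2j+1 entries + and the rest −; and ((+,…,+), 0) ⊗ ((−,…,−), 2k+1) for each k ∈ ℤ_{≥0}.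 -/
namespace CrystalPaper

/-- Elements of the combinatorial model of `B(−ω_N)` for `U_q(D(N,1))`:
pairs of a sign sequence and a non-negative integer. -/
abbrev MSeq (N : ℕ) := Seq N × ℕ

/-- Membership in the model `M_N` of `B(−ω_N)`: the sign sequence lies in `B_sp^+`
if the integer is even and in `B_sp^−` if it is odd. -/
def memMD (N : ℕ) (x : MSeq N) : Prop :=
  if x.2 % 2 = 0 then BspPlus N x.1 else BspMinus N x.1

/-- Membership in the model `M'_N` of `B(−ω_{N−1})`: parities swapped. -/
def memMD' (N : ℕ) (x : MSeq N) : Prop :=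
  if x.2 % 2 = 0 then BspMinus N x.1 else BspPlus N x.1

/-- The operators `ẽ_l`, `0 ≤ l ≤ N`, on the model: for `l ≥ 1` they act on the sign
sequence; `ẽ_0(b,k) = ((+,b_2,…,b_N), k+1)` if `b_1 = −`, and `0` otherwise. -/
def eSD (N l : ℕ) (x : MSeq N) : Option (MSeq N) :=
  if l = 0 then
    if h : 1 ≤ N then
      if x.1 ⟨0, h⟩ = false then some (Function.update x.1 ⟨0, h⟩ true, x.2 + 1) else none
    else none
  else (eD N l x.1).map fun b => (b, x.2)

/-- The operators `f̃_l`, `0 ≤ l ≤ N`, on the model: for `l ≥ 1` they act on the sign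
sequence; `f̃_0(b,k) = ((−,b_2,…,b_N), k−1)` if `b_1 = +` and `k ≥ 1`, and `0` otherwise. -/
def fSD (N l : ℕ) (x : MSeq N) : Option (MSeq N) :=
  if l = 0 then
    if h : 1 ≤ N then
      if x.1 ⟨0, h⟩ = true ∧ 1 ≤ x.2 then some (Function.update x.1 ⟨0, h⟩ false, x.2 - 1)
      else none
    else none
  else (fD N l x.1).map fun b => (b, x.2)

/-- `⟨h_0, (b,k)⟩ = k` if `b_1 = +`, and `k + 1` if `b_1 = −`. -/
def hZero (N : ℕ) (x : MSeq N) : ℕ :=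
  if h : 1 ≤ N then (if x.1 ⟨0, h⟩ = true then x.2 else x.2 + 1) else x.2

/-- The tensor-product lowering operators on pairs of model elements:
the super rule for `l = 0` (`f̃_0(x ⊗ y) = x ⊗ f̃_0 y` if `⟨h_0,x⟩ = 0`, and
`f̃_0 x ⊗ y` if `⟨h_0,x⟩ > 0`), and the tensor rule for `1 ≤ l ≤ N`. -/
noncomputable def tfSD (N l : ℕ) (p : MSeq N × MSeq N) : Option (MSeq N × MSeq N) :=
  if l = 0 then
    if hZero N p.1 = 0 then (fSD N 0 p.2).map fun y => (p.1, y)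
    else (fSD N 0 p.1).map fun x => (x, p.2)
  else
    if opMax (eSD N l) p.1 < opMax (fSD N l) p.2 then (fSD N l p.2).map fun y => (p.1, y)
    else (fSD N l p.1).map fun x => (x, p.2)

/-! Every string of `f̃_l` and `ẽ_l` has length at most one, so for `l ≥ 1` the tensor rule kills
`x ⊗ y` exactly when `f̃_l x = 0` and either `f̃_l y = 0` or `ẽ_l x ≠ 0`. The conditions
`f̃_l b = 0` for `1 ≤ l < N` say that the sign sequence `b` is antitone (`true` codes `+`), i.e.
`b = (+^p, −^{N−p})`. For `x = (b, k)`, `f̃_N b = 0` leaves at most one `−`, then `f̃_0` forces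
`k = 0` and the parity condition of `M_N` forces `b = (+,…,+)`. As `ẽ_l (+,…,+) = 0` exactly for
`l < N`, the conditions on `y = (c, m)` reduce to `c = (+^q, −^{N−q})` and `c_1 = −` or `m = 0`;
the parity condition of `M'_N` with `N` even leaves `q` odd with `m = 0`, or `q = 0` with `m` odd.
-/

theorem opMax_eq_ite {σ : Type*} {f : σ → Option σ} (hf : ∀ x x', f x = some x' → f x' = none)
    (x : σ) : opMax f x = if f x = none then 0 else 1 := by
  rcases hx : f x with _ | x'
  · have : {n | iterOp f n x ≠ none} = {0} := by
      ext (_ | n) <;> simp [iterOp, hx]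
    simp [opMax, this]
  · have : {n | iterOp f n x ≠ none} = {0, 1} := by
      ext (_ | _ | n) <;> simp [iterOp, hx, hf x x' hx]
    simp [opMax, this]

section Operators

variable {N l : ℕ}

theorem fD_eq_none_of_eq_some {b b' : Seq N} (h : fD N l b = some b') : fD N l b' = none := by
  unfold fD at h ⊢
  dsimp only at h ⊢
  split_ifs at h ⊢ <;> cases h <;>
    simp_all [Function.update_apply, Fin.ext_iff]

theorem eD_eq_none_of_eq_some {b b' : Seq N} (h : eD N l b = some b') : eD N l b' = none := by
  unfold eD at h ⊢
  dsimp only at h ⊢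
  split_ifs at h ⊢ <;> cases h <;>
    simp_all [Function.update_apply, Fin.ext_iff]

theorem fSD_eq_none_of_eq_some {x x' : MSeq N} (h : fSD N l x = some x') : fSD N l x' = none := by
  unfold fSD at h ⊢
  split_ifs at h ⊢ <;> first
    | cases h; simp_all
    | simp only [Option.map_eq_some_iff] at h
      obtain ⟨b', hb', rfl⟩ := h
      simp [fD_eq_none_of_eq_some hb']

theorem eSD_eq_none_of_eq_some {x x' : MSeq N} (h : eSD N l x = some x') : eSD N l x' = none := by
  unfold eSD at h ⊢
  split_ifs at h ⊢ <;> first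
    | cases h; simp_all
    | simp only [Option.map_eq_some_iff] at h
      obtain ⟨b', hb', rfl⟩ := h
      simp [eD_eq_none_of_eq_some hb']

theorem tfSD_eq_none_iff (hl : l ≠ 0) (x y : MSeq N) :
    tfSD N l (x, y) = none ↔ fD N l x.1 = none ∧ (fD N l y.1 = none ∨ eD N l x.1 ≠ none) := by
  simp only [tfSD, if_neg hl, opMax_eq_ite fun _ _ => fSD_eq_none_of_eq_some,
    opMax_eq_ite fun _ _ => eSD_eq_none_of_eq_some]
  simp only [fSD, eSD, if_neg hl, Option.map_eq_none_iff]
  rcases fD N l x.1 with _ | _ <;> rcases fD N l y.1 with _ | _ <;> rcases eD N l x.1 with _ | _ <;>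
    simp

theorem tfSD_zero_eq_none_iff (hN : 1 ≤ N) (x y : MSeq N) :
    tfSD N 0 (x, y) = none ↔
      x.1 ⟨0, hN⟩ = false ∨ (x.2 = 0 ∧ (y.1 ⟨0, hN⟩ = false ∨ y.2 = 0)) := by
  obtain ⟨b, k⟩ := x
  obtain ⟨c, m⟩ := y
  simp only [tfSD, hZero, fSD, dif_pos hN, if_true]
  cases hb : b ⟨0, hN⟩ <;> cases hc : c ⟨0, hN⟩ <;> cases k <;> cases m <;> simp_all

end Operators

section Sequences

variable {N : ℕ}

theorem fD_eq_none_iff_of_lt {l : ℕ} (hl : 1 ≤ l) (hlN : l < N) (b : Seq N) :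
    fD N l b = none ↔ b ⟨l, hlN⟩ ≤ b ⟨l - 1, by omega⟩ := by
  rw [fD, dif_pos ⟨hl, hlN⟩]
  dsimp only
  cases b ⟨l, hlN⟩ <;> cases b ⟨l - 1, by omega⟩ <;> simp

theorem fD_self_eq_none_iff (hN : 2 ≤ N) (b : Seq N) :
    fD N N b = none ↔ b ⟨N - 2, by omega⟩ = true ∨ b ⟨N - 1, by omega⟩ = true := by
  rw [fD, dif_neg (by omega), dif_pos ⟨rfl, hN⟩]
  dsimp only
  cases b ⟨N - 2, by omega⟩ <;> cases b ⟨N - 1, by omega⟩ <;> simp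

theorem antitone_iff_fD_eq_none (b : Seq N) :
    Antitone b ↔ ∀ l, 1 ≤ l → l < N → fD N l b = none := by
  cases N with
  | zero => exact iff_of_true (fun i => i.elim0) fun _ _ h => absurd h (Nat.not_lt_zero _)
  | succ n =>
    rw [Fin.antitone_iff_succ_le]
    constructor
    · intro h l hl hlN
      rw [fD_eq_none_iff_of_lt hl hlN]
      obtain ⟨i, rfl⟩ : ∃ i, l = i + 1 := ⟨l - 1, by omega⟩
      exact h ⟨i, by omega⟩
    · intro h i
      exact (fD_eq_none_iff_of_lt (Nat.le_add_left 1 i) (by omega) b).1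
        (h (i + 1) (by omega) (by omega))

theorem eD_top_eq_none {l : ℕ} (hl : l ≠ N) : eD N l (top N) = none := by
  unfold eD
  split_ifs <;> simp_all [top]

theorem eD_self_top_ne_none (hN : 2 ≤ N) : eD N N (top N) ≠ none := by
  rw [eD, dif_neg (by omega), dif_pos ⟨rfl, hN⟩]
  simp [top]

theorem antitone_lowSeq (k : ℕ) : Antitone (lowSeq N k) := by
  intro i j hij
  simp only [lowSeq, Bool.le_iff_imp, decide_eq_true_eq]
  exact (Fin.le_iff_val_le_val.1 hij).trans_lt

theorem lowSeq_zero : lowSeq N 0 = bot N := by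
  funext i
  simp [lowSeq, bot]

theorem lowSeq_self : lowSeq N N = top N := by
  funext i
  simp [lowSeq, top]

theorem minusCount_le (b : Seq N) : minusCount N b ≤ N :=
  (Finset.card_filter_le _ _).trans_eq (Finset.card_fin N)

theorem eq_lowSeq_of_antitone {b : Seq N} (hb : Antitone b) :
    b = lowSeq N (N - minusCount N b) := by
  funext i
  have hi := i.2
  by_cases hbi : b i = false
  · have hsub : Finset.Ici i ⊆ Finset.univ.filter (fun j => b j = false) := fun j hj => by
      simpa [Bool.le_iff_imp, hbi] using hb (Finset.mem_Ici.1 hj)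
    have := Finset.card_le_card hsub
    rw [Fin.card_Ici] at this
    rw [hbi, lowSeq, eq_comm, decide_eq_false_iff_not, minusCount]
    omega
  · have hsub : Finset.univ.filter (fun j => b j = false) ⊆ Finset.Ioi i := fun j hj => by
      simp only [Finset.mem_filter, Finset.mem_univ, true_and] at hj
      simp only [Finset.mem_Ioi]
      by_contra hji
      exact hbi (by simpa [Bool.le_iff_imp, hj] using hb (not_lt.1 hji))
    have := Finset.card_le_card hsub
    rw [Fin.card_Ioi] at this
    rw [Bool.not_eq_false] at hbi
    rw [hbi, lowSeq, eq_comm, decide_eq_true_eq, minusCount]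
    omega

end Sequences

section LowestWeight

variable {N : ℕ}

theorem tfSD_top_eq_none_iff (hN : 2 ≤ N) (y : MSeq N) :
    (∀ i, i ≤ N → tfSD N i ((top N, 0), y) = none) ↔
      Antitone y.1 ∧ (y.1 ⟨0, by omega⟩ = false ∨ y.2 = 0) := by
  have htop : ∀ l, 1 ≤ l → l < N → fD N l (top N) = none :=
    (antitone_iff_fD_eq_none _).1 antitone_const
  rw [antitone_iff_fD_eq_none]
  constructor
  · intro h
    refine ⟨fun l hl hlN => ?_, ?_⟩
    · simpa [eD_top_eq_none hlN.ne] using ((tfSD_eq_none_iff (by omega) _ _).1 (h l hlN.le)).2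
    · simpa [top] using (tfSD_zero_eq_none_iff (by omega) _ _).1 (h 0 (Nat.zero_le N))
  · rintro ⟨hy, hy0⟩ i hi
    rcases Nat.eq_zero_or_pos i with rfl | hi0
    · simp [tfSD_zero_eq_none_iff (by omega : 1 ≤ N), hy0]
    · rw [tfSD_eq_none_iff hi0.ne']
      rcases hi.lt_or_eq with hiN | rfl
      · exact ⟨htop i hi0 hiN, .inl (hy i hi0 hiN)⟩
      · exact ⟨(fD_self_eq_none_iff hN _).2 (.inl rfl), .inr (eD_self_top_ne_none hN)⟩

theorem eq_top_zero_of_tfSD_eq_none (hN : 2 ≤ N) {x y : MSeq N} (hx : memMD N x)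
    (h : ∀ i, i ≤ N → tfSD N i (x, y) = none) : x = (top N, 0) := by
  obtain ⟨b, k⟩ := x
  have hfD : ∀ l, 1 ≤ l → l ≤ N → fD N l b = none := fun l hl hlN =>
    ((tfSD_eq_none_iff (by omega) _ _).1 (h l hlN)).1
  have hb := eq_lowSeq_of_antitone ((antitone_iff_fD_eq_none b).2 fun l hl hlN => hfD l hl hlN.le)
  have hmc := minusCount_le b
  have hmc1 : minusCount N b ≤ 1 := by
    have := (fD_self_eq_none_iff hN b).1 (hfD N (by omega) le_rfl)
    rw [hb] at this
    simp only [lowSeq, decide_eq_true_eq] at this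
    omega
  have hk : k = 0 := by
    have := (tfSD_zero_eq_none_iff (by omega) _ _).1 (h 0 (Nat.zero_le N))
    rw [hb] at this
    simp only [lowSeq, decide_eq_false_iff_not] at this
    omega
  subst hk
  have hmc0 : minusCount N b = 0 := by
    simp only [memMD, Nat.zero_mod, if_true, BspPlus] at hx
    rcases hx with ⟨r, hr⟩
    omega
  rw [hb, hmc0, Nat.sub_zero, lowSeq_self]

theorem antitone_and_head_iff_of_memMD' (hN : 2 ≤ N) (hEven : Even N) {y : MSeq N}
    (hy : memMD' N y) :
    Antitone y.1 ∧ (y.1 ⟨0, by omega⟩ = false ∨ y.2 = 0) ↔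
      (∃ j, 2 * j ≤ N - 2 ∧ y = (lowSeq N (2 * j + 1), 0)) ∨ (∃ k, y = (bot N, 2 * k + 1)) := by
  obtain ⟨c, m⟩ := y
  constructor
  · rintro ⟨hc, hc0⟩
    dsimp only at hc hc0
    have hc' := eq_lowSeq_of_antitone hc
    have hmc := minusCount_le c
    obtain ⟨n, hn⟩ := hEven
    rcases Nat.eq_zero_or_pos m with rfl | hm
    · simp only [memMD', Nat.zero_mod, if_true, BspMinus] at hy
      obtain ⟨r, hr⟩ := hy
      refine .inl ⟨n - r - 1, by omega, ?_⟩
      rw [hc']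
      congr 2
      omega
    · have hq : N - minusCount N c = 0 := by
        have := hc0.resolve_right hm.ne'
        rw [hc'] at this
        simp only [lowSeq, decide_eq_false_iff_not, not_lt] at this
        omega
      have hmcN : minusCount N c = N := by omega
      have hmodd : m % 2 = 1 := by
        by_contra hm2
        simp only [memMD', Nat.mod_two_ne_one.1 hm2, if_true, BspMinus, hmcN] at hy
        exact Nat.not_odd_iff_even.2 ⟨n, hn⟩ hy
      refine .inr ⟨m / 2, ?_⟩
      rw [hc', hq, lowSeq_zero]
      congr 1
      omega
  · rintro (⟨j, -, h⟩ | ⟨k, h⟩) <;> cases h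
    · exact ⟨antitone_lowSeq _, .inr rfl⟩
    · exact ⟨antitone_const, .inl rfl⟩

end LowestWeight

/-- For `N ≥ 2` even, the lowest weight elements of `M_N × M'_N` (the
model of `B(−ω_N) ⊗ B(−ω_{N−1})` for `U_q(D(N,1))`), i.e. the elements killed by all
tensor-product operators `f̃_i`, `0 ≤ i ≤ N`, are exactly
`((+,…,+),0) ⊗ ((+^{2j+1},−^{N−2j−1}),0)` for `0 ≤ j ≤ (N−2)/2`, and
`((+,…,+),0) ⊗ ((−,…,−),2k+1)` for `k ∈ ℤ_{≥0}`. -/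
theorem lowest_weight_MD_tensor_MD' (N : ℕ) (hN : 2 ≤ N) (hEven : Even N)
    (x y : MSeq N) (hx : memMD N x) (hy : memMD' N y) :
    (∀ i, i ≤ N → tfSD N i (x, y) = none) ↔
      (x = (top N, 0) ∧
        ((∃ j, 2 * j ≤ N - 2 ∧ y = (lowSeq N (2 * j + 1), 0)) ∨
          (∃ k, y = (bot N, 2 * k + 1)))) := by
  have hy' := (tfSD_top_eq_none_iff hN y).trans (antitone_and_head_iff_of_memMD' hN hEven hy)
  constructor
  · intro h
    obtain rfl := eq_top_zero_of_tfSD_eq_none hN hx h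
    exact ⟨rfl, hy'.1 h⟩
  · rintro ⟨rfl, hfam⟩
    exact hy'.2 hfam

end CrystalPaper
end

section
/- (Lemma on lowest weight vectors in tensor products) Let N ≥ 1 and let B_1, B_2 be sets, each equipped with a function ⟨h_0, ·⟩ : B_j → ℤ and partial operators ẽ_i, f̃_i : B_j → B_j ∪ {0} for 0 ≤ i ≤ N, such that: (a) for every element x and every 1 ≤ i ≤ N, the quantities ε_i(x) = max{n ≥ 0 : ẽ_i^n x ≠ 0} and φ_i(x) = max{n ≥ 0 : f̃_i^n x ≠ 0} are finite; (b) ⟨h_0, x⟩ ≥ 0 for every x; (c) ẽ_0 x = f̃_0 x = 0 whenever ⟨h_0, x⟩ = 0. Define operators on B_1 × B_2 by the tensor rules: for 1 ≤ i ≤ N, f̃_i(x ⊗ y) = x ⊗ f̃_i y if ε_i(x) < φ_i(y) and = f̃_i x ⊗ y if ε_i(x) ≥ φ_i(y); f̃_0(x ⊗ y) = x ⊗ f̃_0 y if ⟨h_0, x⟩ = 0 and = f̃_0 x ⊗ y if ⟨h_0, x⟩ > 0 (result 0 when the operator applied to the chosen factor is 0). Then every pair (x, y) ∈ B_1 ×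 B_2 with f̃_i(x ⊗ y) = 0 for all 0 ≤ i ≤ N satisfies f̃_i x = 0 for all 0 ≤ i ≤ N; that is, every lowest weight element of B_1 ⊗ B_2 is of the form u_1 ⊗ v with u_1 a lowest weight element of B_1. -/
namespace CrystalPaper

/-- The tensor-product lowering operator `f̃_i` on `B₁ × B₂`:
for `i = 0` the super rule (`f̃_0(x ⊗ y) = x ⊗ f̃_0 y` if `⟨h_0,x⟩ = 0`, and
`f̃_0 x ⊗ y` if `⟨h_0,x⟩ > 0`); for `i ≥ 1` the tensor rule
(`f̃_i(x ⊗ y) = x ⊗ f̃_i y` if `ε_i(x) < φ_i(y)`, and `f̃_i x ⊗ y` if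
`ε_i(x) ≥ φ_i(y)`); the result is `none` when the operator applied to the chosen
factor is `none`. -/
noncomputable def tfGen {B₁ B₂ : Type*} (h₁ : B₁ → ℤ)
    (e₁ f₁ : ℕ → B₁ → Option B₁) (f₂ : ℕ → B₂ → Option B₂)
    (i : ℕ) (x : B₁) (y : B₂) : Option (B₁ × B₂) :=
  if i = 0 then
    if h₁ x = 0 then (f₂ 0 y).map fun y' => (x, y')
    else (f₁ 0 x).map fun x' => (x', y)
  else
    if opMax (e₁ i) x < opMax (f₂ i) y then (f₂ i y).map fun y' => (x, y')
    else (f₁ i x).map fun x' => (x', y)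

/-! If `f̃_i y = 0` then `φ_i(y) = 0`, so the tensor rule never selects the second factor and
`f̃_i (x ⊗ y) = 0` forces `f̃_i x = 0`. The only exception is `i = 0` with `⟨h_0, x⟩ = 0`, where
hypothesis (c) gives `f̃_0 x = 0` directly. -/

lemma opMax_eq_zero_of_eq_none {σ : Type*} {f : σ → Option σ} {y : σ} (h : f y = none) :
    opMax f y = 0 := by
  have hset : {n | iterOp f n y ≠ none} = {0} := by
    ext n
    cases n <;> simp [iterOp, h]
  simp [opMax, hset]

lemma eq_none_or_of_tfGen_eq_none {B₁ B₂ : Type*} {h₁ : B₁ → ℤ}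
    {e₁ f₁ : ℕ → B₁ → Option B₁} {f₂ : ℕ → B₂ → Option B₂} {i : ℕ} {x : B₁} {y : B₂}
    (h : tfGen h₁ e₁ f₁ f₂ i x y = none) : f₁ i x = none ∨ (i = 0 ∧ h₁ x = 0) := by
  unfold tfGen at h
  split_ifs at h with hi hx hlt
  · exact Or.inr ⟨hi, hx⟩
  · exact Or.inl (hi ▸ Option.map_eq_none_iff.1 h)
  · have := opMax_eq_zero_of_eq_none (Option.map_eq_none_iff.1 h)
    omega
  · exact Or.inl (Option.map_eq_none_iff.1 h)

theorem lowest_weight_tensor_first_factor_general (N : ℕ)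
    {B₁ B₂ : Type*} (h₁ : B₁ → ℤ)
    (e₁ f₁ : ℕ → B₁ → Option B₁) (f₂ : ℕ → B₂ → Option B₂)
    (hc₁ : ∀ x, h₁ x = 0 → e₁ 0 x = none ∧ f₁ 0 x = none)
    (x : B₁) (y : B₂)
    (hlw : ∀ i, i ≤ N → tfGen h₁ e₁ f₁ f₂ i x y = none) :
    ∀ i, i ≤ N → f₁ i x = none := by
  intro i hi
  rcases eq_none_or_of_tfGen_eq_none (hlw i hi) with hf | ⟨rfl, hx⟩
  · exact hf
  · exact (hc₁ x hx).2

/-- lemma on lowest weight vectors in tensor products.  Let `N ≥ 1`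
and let `B₁`, `B₂` carry functions `⟨h_0, ·⟩` and partial operators `ẽ_i, f̃_i`,
`0 ≤ i ≤ N`, such that (a) all strings for `1 ≤ i ≤ N` are finite, (b) `⟨h_0, ·⟩ ≥ 0`
everywhere, and (c) `ẽ_0` and `f̃_0` kill every element with `⟨h_0, ·⟩ = 0`.  Then
every pair `(x, y)` killed by all tensor-product operators `f̃_i`, `0 ≤ i ≤ N`,
satisfies `f̃_i x = 0` for all `0 ≤ i ≤ N`: every lowest weight element of
`B₁ ⊗ B₂` is of the form `u₁ ⊗ v` with `u₁` a lowest weight element of `B₁`. -/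
theorem lowest_weight_tensor_first_factor (N : ℕ) (hN : 1 ≤ N)
    {B₁ B₂ : Type*} (h₁ : B₁ → ℤ) (h₂ : B₂ → ℤ)
    (e₁ f₁ : ℕ → B₁ → Option B₁) (e₂ f₂ : ℕ → B₂ → Option B₂)
    (ha₁ : ∀ i, 1 ≤ i → i ≤ N → ∀ x : B₁,
      BddAbove {n | iterOp (e₁ i) n x ≠ none} ∧ BddAbove {n | iterOp (f₁ i) n x ≠ none})
    (ha₂ : ∀ i, 1 ≤ i → i ≤ N → ∀ y : B₂,
      BddAbove {n | iterOp (e₂ i) n y ≠ none} ∧ BddAbove {n | iterOp (f₂ i) n y ≠ none})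
    (hb₁ : ∀ x, 0 ≤ h₁ x) (hb₂ : ∀ y, 0 ≤ h₂ y)
    (hc₁ : ∀ x, h₁ x = 0 → e₁ 0 x = none ∧ f₁ 0 x = none)
    (hc₂ : ∀ y, h₂ y = 0 → e₂ 0 y = none ∧ f₂ 0 y = none)
    (x : B₁) (y : B₂)
    (hlw : ∀ i, i ≤ N → tfGen h₁ e₁ f₁ f₂ i x y = none) :
    ∀ i, i ≤ N → f₁ i x = none :=
  lowest_weight_tensor_first_factor_general N h₁ e₁ f₁ f₂ hc₁ x y hlw

end CrystalPaper
end
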